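/- arXiv:0908.1582 — 10 statements merged into one kernel-verified Lean document; each statement's English description precedes it below -/
import Mathlib

section
/- Let X be a finite metric space with n ≥ 2 points such that d(x,x') > ln(n−1) for every pair of distinct points x ≠ x'. Then the exponentiated distance matrix Z of X, with entries Z_{xx'} = exp(−d(x,x')), is positive definite and hence invertible; consequently X has a well-defined magnitude. -/
/-! The separation bound makes every off-diagonal entry of `Z` smaller than `1 / (n - 1)`, so
each off-diagonal row sum is below the diagonal entry `1`: `Z` is a strictly diagonally dominant
symmetric matrix, and Gershgorin's circle theorem puts all its eigenvalues in `(0, ∞)`. -/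

open Finset

namespace Matrix

variable {n : Type*} [Fintype n] [DecidableEq n]

theorem IsHermitian.posDef_of_sum_abs_lt_diag {A : Matrix n n ℝ} (hA : A.IsHermitian)
    (h : ∀ i, ∑ j ∈ univ.erase i, |A i j| < A i i) : A.PosDef := by
  refine hA.posDef_iff_eigenvalues_pos.mpr fun i => ?_
  have hμ : Module.End.HasEigenvalue A.toLin' (hA.eigenvalues i) := by
    rw [Module.End.hasEigenvalue_iff_mem_spectrum, spectrum_toLin']
    exact hA.eigenvalues_mem_spectrum_real i
  obtain ⟨k, hk⟩ := eigenvalue_mem_ball hμ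
  rw [Metric.mem_closedBall, Real.dist_eq] at hk
  simp only [Real.norm_eq_abs] at hk
  linarith [neg_abs_le (hA.eigenvalues i - A k k), h k]

end Matrix

namespace Metric

noncomputable def expDistMatrix (X : Type*) [PseudoMetricSpace X] : Matrix X X ℝ :=
  Matrix.of fun x x' => Real.exp (-dist x x')

variable {X : Type*} [PseudoMetricSpace X]

@[simp]
theorem expDistMatrix_apply (x x' : X) : expDistMatrix X x x' = Real.exp (-dist x x') := rfl

theorem isHermitian_expDistMatrix : (expDistMatrix X).IsHermitian := by
  ext x x'
  simp [dist_comm]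

variable [Fintype X]

def IsWeighting (w : X → ℝ) : Prop :=
  ∀ x, ∑ x', Real.exp (-dist x x') * w x' = 1

theorem exists_isWeighting_of_isUnit_det [DecidableEq X] (h : IsUnit (expDistMatrix X).det) :
    ∃ w : X → ℝ, IsWeighting w := by
  obtain ⟨w, hw⟩ := Matrix.mulVec_surjective_iff_isUnit.mpr
    ((Matrix.isUnit_iff_isUnit_det _).mpr h) 1
  exact ⟨w, fun x => congrFun hw x⟩

theorem sum_exp_neg_dist_erase_lt_one [DecidableEq X] (hn : 2 ≤ Fintype.card X)
    (hsep : ∀ x x' : X, x ≠ x' → Real.log ((Fintype.card X : ℝ) - 1) < dist x x') (x : X) :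
    ∑ x' ∈ univ.erase x, Real.exp (-dist x x') < 1 := by
  have hn' : (1 : ℝ) ≤ (Fintype.card X : ℝ) - 1 := by
    have : (2 : ℝ) ≤ Fintype.card X := by exact_mod_cast hn
    linarith
  have hne : (univ.erase x).Nonempty := by
    obtain ⟨x', hx'⟩ := Fintype.exists_ne_of_one_lt_card (by omega) x
    exact ⟨x', mem_erase.mpr ⟨hx', mem_univ _⟩⟩
  calc ∑ x' ∈ univ.erase x, Real.exp (-dist x x')
      < ∑ _x' ∈ univ.erase x, ((Fintype.card X : ℝ) - 1)⁻¹ := by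
        refine sum_lt_sum_of_nonempty hne fun x' hx' => ?_
        rw [← Real.exp_log (by linarith : (0 : ℝ) < Fintype.card X - 1), ← Real.exp_neg]
        exact Real.exp_lt_exp.mpr (neg_lt_neg (hsep x x' (ne_of_mem_erase hx').symm))
    _ = 1 := by
        rw [sum_const, card_erase_of_mem (mem_univ x), card_univ, nsmul_eq_mul,
          Nat.cast_sub (by omega), Nat.cast_one, mul_inv_cancel₀ (by linarith)]

theorem posDef_expDistMatrix [DecidableEq X] (hn : 2 ≤ Fintype.card X)
    (hsep : ∀ x x' : X, x ≠ x' → Real.log ((Fintype.card X : ℝ) - 1) < dist x x') :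
    (expDistMatrix X).PosDef := by
  refine isHermitian_expDistMatrix.posDef_of_sum_abs_lt_diag fun x => ?_
  simpa [abs_of_pos (Real.exp_pos _)] using sum_exp_neg_dist_erase_lt_one hn hsep x

end Metric

/-- If `X` is a finite metric space with `n ≥ 2` points in which every pair of distinct
points is at distance greater than `ln (n - 1)`, then the exponentiated distance matrix
`Z x x' = exp (−d(x,x'))` is positive definite (hence invertible), and consequently `X`
has a weighting, so its magnitude is well-defined. -/
theorem sufficiently_separated_has_magnitude
    {X : Type*} [Fintype X] [DecidableEq X] [MetricSpace X]
    (hn : 2 ≤ Fintype.card X)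
    (hsep : ∀ x x' : X, x ≠ x' → Real.log ((Fintype.card X : ℝ) - 1) < dist x x') :
    (∀ v : X → ℝ, v ≠ 0 →
      0 < dotProduct v ((Matrix.of fun x x' : X => Real.exp (-dist x x')).mulVec v)) ∧
    IsUnit (Matrix.of fun x x' : X => Real.exp (-dist x x')).det ∧
    ∃ w : X → ℝ, ∀ x : X, ∑ x' : X, Real.exp (-dist x x') * w x' = 1 := by
  have hpd := Metric.posDef_expDistMatrix hn hsep
  have hdet : IsUnit (Metric.expDistMatrix X).det := hpd.det_pos.ne'.isUnit
  exact ⟨fun v hv => hpd.dotProduct_mulVec_pos hv, hdet,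
    Metric.exists_isWeighting_of_isUnit_det hdet⟩
end

section
/- (Speyer's formula) Let X be a finite metric space with n points that is homogeneous in the sense that the quantity S(x) := Σ_{x'∈X} exp(−d(x,x')) takes the same value S for every x ∈ X (this holds in particular when a group of isometries acts transitively on X). Then the constant function w with w(x) = 1/S for all x is a weighting on X, and consequently the magnitude of X is defined and equals n/S = n / Σ_{x'∈X} exp(−d(x,x')) for any fixed x ∈ X. -/
/-- Speyer's formula: if a finite metric space `X` is homogeneous, in the sense that
`S = Σ_{x'} exp (−d(x,x'))` is the same for every point `x`, then the constant function
`1/S` is a weighting on `X`, and hence the magnitude of `X` is defined and equals `n / S`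
where `n` is the number of points. -/
theorem speyer_formula {X : Type*} [Fintype X] [MetricSpace X] (S : ℝ)
    (hS : ∀ x : X, ∑ x' : X, Real.exp (-dist x x') = S) :
    (∀ x : X, ∑ x' : X, Real.exp (-dist x x') * (1 / S) = 1) ∧
    (∑ _x : X, (1 / S) = (Fintype.card X : ℝ) / S) := by
  constructor
  · intro x
    have hpos : 0 < S := by
      rw [← hS x]
      exact Finset.sum_pos (fun i _ => Real.exp_pos _) ⟨x, Finset.mem_univ x⟩
    rw [← Finset.sum_mul, hS x]
    field_simp
  · rw [Finset.sum_const, Finset.card_univ]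
    simp [div_eq_mul_inv, mul_comm]
end

section
/- Let X be a finite metric space with n points. For all sufficiently large t > 0, the matrix Z_{tX} with entries (Z_{tX})_{xx'} = exp(−t·d(x,x')) is invertible, and the magnitude |tX| (the sum of all entries of Z_{tX}^{−1}) tends to n as t → ∞. -/
open Filter Topology

/-! As `t → ∞` the off-diagonal entries `exp (-t d(x, x'))` decay to `0` while the diagonal
stays `1`, so `Z_{tX} → 1`. Matrix inversion is continuous at the identity, hence
`Z_{tX}⁻¹ → 1`, whose entries sum to the number of points. -/

theorem Matrix.continuousAt_inv_of_isUnit_det {n R : Type*} [Fintype n] [DecidableEq n]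
    [Field R] [TopologicalSpace R] [IsTopologicalDivisionRing R] {A : Matrix n n R}
    (hA : IsUnit A.det) :
    ContinuousAt Inv.inv A := by
  refine continuousAt_matrix_inv A ?_
  rw [Ring.inverse_eq_inv']
  exact continuousAt_inv₀ hA.ne_zero

theorem Matrix.sum_sum_one_apply {n R : Type*} [Fintype n] [DecidableEq n]
    [AddCommMonoidWithOne R] :
    ∑ i : n, ∑ j : n, (1 : Matrix n n R) i j = Fintype.card n := by
  simp [Matrix.one_apply]

theorem tendsto_exp_neg_mul_dist_atTop {X : Type*} [MetricSpace X] [DecidableEq X]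
    (x x' : X) :
    Tendsto (fun t : ℝ => Real.exp (-(t * dist x x'))) atTop
      (𝓝 ((1 : Matrix X X ℝ) x x')) := by
  rcases eq_or_ne x x' with rfl | hne
  · simp
  · rw [Matrix.one_apply_ne hne]
    exact Real.tendsto_exp_atBot.comp
      (tendsto_neg_atBot_iff.mpr (tendsto_id.atTop_mul_const (dist_pos.mpr hne)))

theorem tendsto_expDistMatrix_atTop {X : Type*} [Fintype X] [DecidableEq X] [MetricSpace X] :
    Tendsto (fun t : ℝ => Matrix.of fun x x' : X => Real.exp (-(t * dist x x')))
      atTop (𝓝 (1 : Matrix X X ℝ)) :=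
  tendsto_pi_nhds.mpr fun x => tendsto_pi_nhds.mpr fun x' => tendsto_exp_neg_mul_dist_atTop x x'

/-- For a finite metric space `X` with `n` points, the exponentiated distance matrix of
the scaled space `tX` is invertible for all sufficiently large `t`, and the magnitude
`|tX|` (the sum of all entries of the inverse matrix) tends to `n` as `t → ∞`. -/
theorem magnitude_tendsto_card
    {X : Type*} [Fintype X] [DecidableEq X] [MetricSpace X] :
    (∀ᶠ t : ℝ in atTop,
      IsUnit (Matrix.of fun x x' : X => Real.exp (-(t * dist x x'))).det) ∧
    Tendsto
      (fun t : ℝ => ∑ x : X, ∑ x' : X,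
        (Matrix.of fun x x' : X => Real.exp (-(t * dist x x')))⁻¹ x x')
      atTop (𝓝 (Fintype.card X : ℝ)) := by
  have hZ := tendsto_expDistMatrix_atTop (X := X)
  have hdet : Tendsto (fun t : ℝ => (Matrix.of fun x x' : X => Real.exp (-(t * dist x x'))).det)
      atTop (𝓝 1) := by
    simpa [Function.comp_def] using (continuous_id.matrix_det.tendsto _).comp hZ
  refine ⟨(hdet.eventually_ne one_ne_zero).mono fun _ h => isUnit_iff_ne_zero.mpr h, ?_⟩
  have hinv := (Matrix.continuousAt_inv_of_isUnit_det (by simp)).tendsto.comp hZ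
  rw [inv_one] at hinv
  rw [← Matrix.sum_sum_one_apply]
  exact tendsto_finsetSum _ fun x _ => tendsto_finsetSum _ fun x' _ =>
    tendsto_pi_nhds.mp (tendsto_pi_nhds.mp hinv x) x'
end

section
/- Let n ≥ 1 and let d = (d_1,…,d_{n−1}) be a tuple of strictly positive real numbers, and let X_d be the linear metric space on points x_1,…,x_n with d(x_i,x_j) = Σ_{s=i}^{j−1} d_s for i ≤ j. Then the function w given by w(x_i) = (1/2)(tanh(d_{i−1}/2) + tanh(d_i/2)), with the convention d_0 = d_n = ∞ (so tanh(∞/2) is read as 1, i.e. w(x_1) = (1/2)(1 + tanh(d_1/2)) and w(x_n) = (1/2)(tanh(d_{n−1}/2) + 1)), is a weighting on X_d, and the magnitude of X_d equals 1 + Σ_{i=1}^{n−1} tanh(d_i/2). -/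
/-!
Write `t_i = tanh (d_{i-1} / 2)` for the gap to the left of point `i`, with `t_0 = t_n = 1`, so
that `w_i = (t_i + t_{i+1}) / 2`. The identity `e^{-x} (1 + tanh (x/2)) = 1 - tanh (x/2)` shows
by induction that the partial sums `L_i = ∑_{j ≤ i} e^{-d(x_j, x_i)} w_j` satisfy
`L_i = (1 + t_{i+1}) / 2`, since `L_{i+1} = e^{-d_i} L_i + w_{i+1}`. Symmetrically
`R_i = ∑_{j ≥ i} e^{-d(x_i, x_j)} w_j = (1 + t_i) / 2`, and the weighting equation at `x_i` is
`L_i + R_i - w_i = 1`. Summing `w_i = (t_i + t_{i+1}) / 2` gives the magnitude.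
-/

open Finset Real

theorem exp_neg_mul_one_add_tanh_half (x : ℝ) :
    exp (-x) * (1 + tanh (x / 2)) = 1 - tanh (x / 2) := by
  have hprod : exp (x / 2) * exp (-(x / 2)) = 1 := by rw [← exp_add]; simp
  have hsq : exp (-x) = exp (-(x / 2)) ^ 2 := by rw [← exp_nat_mul]; ring_nf
  have hpos : 0 < exp (x / 2) + exp (-(x / 2)) := by positivity
  rw [tanh_eq, hsq]
  field_simp
  linear_combination (2 * exp (-(x / 2))) * hprod

namespace LinearMetricSpace

/-- `tanhGap n d i = tanh (d (i - 1) / 2)`, the value for the gap to the left of point `i`; the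
gaps to the left of point `0` and to the right of point `n - 1` are infinite, giving `1`. -/
noncomputable def tanhGap (n : ℕ) (d : ℕ → ℝ) : ℕ → ℝ
  | 0 => 1
  | i + 1 => if i + 1 < n then tanh (d i / 2) else 1

variable {n : ℕ} {d w : ℕ → ℝ}

theorem tanhGap_succ_of_lt {i : ℕ} (h : i + 1 < n) : tanhGap n d (i + 1) = tanh (d i / 2) :=
  if_pos h

theorem tanhGap_self (hn : 1 ≤ n) : tanhGap n d n = 1 := by
  obtain ⟨m, rfl⟩ : ∃ m, n = m + 1 := ⟨n - 1, by omega⟩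
  exact if_neg (lt_irrefl _)

theorem tanhGap_add_tanhGap_succ {i : ℕ} (hi : i < n) :
    tanhGap n d i + tanhGap n d (i + 1)
      = (if i = 0 then 1 else tanh (d (i - 1) / 2)) +
        (if i = n - 1 then 1 else tanh (d i / 2)) := by
  have hleft : tanhGap n d i = if i = 0 then 1 else tanh (d (i - 1) / 2) := by
    cases i with
    | zero => rfl
    | succ i => rw [if_neg i.succ_ne_zero, tanhGap_succ_of_lt hi, Nat.add_sub_cancel]
  have hright : tanhGap n d (i + 1) = if i = n - 1 then 1 else tanh (d i / 2) := by
    by_cases h : i + 1 < n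
    · rw [if_neg (by omega), tanhGap_succ_of_lt h]
    · rw [if_pos (by omega)]
      exact if_neg h
  rw [hleft, hright]

theorem sum_exp_neg_dist_mul_left
    (hw : ∀ i < n, w i = (tanhGap n d i + tanhGap n d (i + 1)) / 2) {i : ℕ} (hi : i < n) :
    ∑ j ∈ range (i + 1), exp (-∑ s ∈ Ico j i, d s) * w j =
      (1 + tanhGap n d (i + 1)) / 2 := by
  induction i with
  | zero => simp [hw 0 hi, tanhGap]
  | succ i ih =>
    have hshift : ∑ j ∈ range (i + 1), exp (-∑ s ∈ Ico j (i + 1), d s) * w j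
        = exp (-d i) * ∑ j ∈ range (i + 1), exp (-∑ s ∈ Ico j i, d s) * w j := by
      rw [mul_sum]
      refine sum_congr rfl fun j hj => ?_
      rw [sum_Ico_succ_top (Nat.lt_succ_iff.mp (mem_range.mp hj)), neg_add, exp_add]
      ring
    rw [sum_range_succ, hshift, ih (by omega), hw (i + 1) hi, tanhGap_succ_of_lt hi]
    simp only [Ico_self, sum_empty, neg_zero, exp_zero, one_mul]
    linear_combination exp_neg_mul_one_add_tanh_half (d i) / 2

theorem sum_exp_neg_dist_mul_right
    (hw : ∀ i < n, w i = (tanhGap n d i + tanhGap n d (i + 1)) / 2) {i : ℕ} (hi : i < n) :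
    ∑ j ∈ Ico i n, exp (-∑ s ∈ Ico i j, d s) * w j = (1 + tanhGap n d i) / 2 := by
  obtain ⟨k, hk⟩ : ∃ k, i + k + 1 = n := ⟨n - 1 - i, by omega⟩
  induction k generalizing i with
  | zero =>
    obtain rfl : n = i + 1 := hk.symm
    rw [Nat.Ico_succ_singleton, sum_singleton, Ico_self, sum_empty, neg_zero, exp_zero, one_mul,
      hw i hi, tanhGap_self (by omega)]
    ring
  | succ k ih =>
    have hshift : ∑ j ∈ Ico (i + 1) n, exp (-∑ s ∈ Ico i j, d s) * w j
        = exp (-d i) * ∑ j ∈ Ico (i + 1) n, exp (-∑ s ∈ Ico (i + 1) j, d s) * w j := by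
      rw [mul_sum]
      refine sum_congr rfl fun j hj => ?_
      rw [sum_eq_sum_Ico_succ_bot (mem_Ico.mp hj).1, neg_add, exp_add]
      ring
    rw [sum_eq_sum_Ico_succ_bot hi, hshift, ih (by omega) (by omega), hw i hi,
      tanhGap_succ_of_lt (by omega)]
    simp only [Ico_self, sum_empty, neg_zero, exp_zero, one_mul]
    linear_combination exp_neg_mul_one_add_tanh_half (d i) / 2

theorem sum_exp_neg_dist_mul_eq_one
    (hw : ∀ i < n, w i = (tanhGap n d i + tanhGap n d (i + 1)) / 2) {i : ℕ} (hi : i < n) :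
    ∑ j ∈ range n, exp (-∑ s ∈ Ico (min i j) (max i j), d s) * w j = 1 := by
  have hleft : ∑ j ∈ range (i + 1), exp (-∑ s ∈ Ico (min i j) (max i j), d s) * w j
      = ∑ j ∈ range (i + 1), exp (-∑ s ∈ Ico j i, d s) * w j := by
    refine sum_congr rfl fun j hj => ?_
    have hji : j ≤ i := Nat.lt_succ_iff.mp (mem_range.mp hj)
    rw [min_eq_right hji, max_eq_left hji]
  have hright : ∑ j ∈ Ico (i + 1) n, exp (-∑ s ∈ Ico (min i j) (max i j), d s) * w j
      = ∑ j ∈ Ico (i + 1) n, exp (-∑ s ∈ Ico i j, d s) * w j := by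
    refine sum_congr rfl fun j hj => ?_
    have hij : i ≤ j := Nat.le_of_succ_le (mem_Ico.mp hj).1
    rw [min_eq_left hij, max_eq_right hij]
  have hR := sum_exp_neg_dist_mul_right hw hi
  rw [sum_eq_sum_Ico_succ_bot hi, Ico_self, sum_empty, neg_zero, exp_zero, one_mul] at hR
  rw [range_eq_Ico, ← sum_Ico_consecutive _ (Nat.zero_le (i + 1)) hi, ← range_eq_Ico, hleft,
    hright, sum_exp_neg_dist_mul_left hw hi]
  linarith [hw i hi]

theorem sum_eq_one_add_sum_tanh
    (hw : ∀ i < n, w i = (tanhGap n d i + tanhGap n d (i + 1)) / 2) (hn : 1 ≤ n) :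
    ∑ i ∈ range n, w i = 1 + ∑ i ∈ range (n - 1), tanh (d i / 2) := by
  obtain ⟨m, rfl⟩ : ∃ m, n = m + 1 := ⟨n - 1, by omega⟩
  have hinner : ∑ i ∈ range m, tanhGap (m + 1) d (i + 1) = ∑ i ∈ range m, tanh (d i / 2) :=
    sum_congr rfl fun i hi => tanhGap_succ_of_lt (by simpa using hi)
  rw [sum_congr rfl fun i hi => hw i (mem_range.mp hi), ← sum_div, sum_add_distrib,
    sum_range_succ', sum_range_succ, tanhGap_self hn, hinner, Nat.add_sub_cancel]
  simp only [tanhGap]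
  ring

end LinearMetricSpace

open LinearMetricSpace in
theorem magnitude_linear_space_general (n : ℕ) (hn : 1 ≤ n) (d : ℕ → ℝ)
    (w : ℕ → ℝ)
    (hw : ∀ i < n, w i = (1 / 2) *
      ((if i = 0 then 1 else Real.tanh (d (i - 1) / 2)) +
       (if i = n - 1 then 1 else Real.tanh (d i / 2)))) :
    (∀ i ∈ Finset.range n,
      ∑ j ∈ Finset.range n,
        Real.exp (-(∑ s ∈ Finset.Ico (min i j) (max i j), d s)) * w j = 1) ∧
    ∑ i ∈ Finset.range n, w i = 1 + ∑ i ∈ Finset.range (n - 1), Real.tanh (d i / 2) := by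
  have hw' : ∀ i < n, w i = (tanhGap n d i + tanhGap n d (i + 1)) / 2 := fun i hi => by
    rw [hw i hi, tanhGap_add_tanhGap_succ hi]
    ring
  exact ⟨fun i hi => sum_exp_neg_dist_mul_eq_one hw' (mem_range.mp hi),
    sum_eq_one_add_sum_tanh hw' hn⟩

/-- The magnitude of a linear metric space: for `n` points `x_1, …, x_n` on a line with
consecutive gaps `d_1, …, d_{n-1} > 0` (so `d(x_i, x_j) = Σ_{s=i}^{j-1} d_s` for `i ≤ j`),
the function `w` with `w(x_i) = ½(tanh(d_{i-1}/2) + tanh(d_i/2))` (with the convention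
`tanh(d_0/2) = tanh(d_n/2) = 1` at the endpoints) is a weighting, and the magnitude is
`1 + Σ_{i=1}^{n-1} tanh(d_i / 2)`.  Here points are indexed by `0, …, n-1` and the gap
`d i` separates point `i` from point `i+1`. -/
theorem magnitude_linear_space (n : ℕ) (hn : 1 ≤ n) (d : ℕ → ℝ)
    (hd : ∀ i, i + 1 < n → 0 < d i) (w : ℕ → ℝ)
    (hw : ∀ i < n, w i = (1 / 2) *
      ((if i = 0 then 1 else Real.tanh (d (i - 1) / 2)) +
       (if i = n - 1 then 1 else Real.tanh (d i / 2)))) :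
    (∀ i ∈ Finset.range n,
      ∑ j ∈ Finset.range n,
        Real.exp (-(∑ s ∈ Finset.Ico (min i j) (max i j), d s)) * w j = 1) ∧
    ∑ i ∈ Finset.range n, w i = 1 + ∑ i ∈ Finset.range (n - 1), Real.tanh (d i / 2) :=
  magnitude_linear_space_general n hn d w hw
end

section
/- Let ℓ > 0 and for each k let X^k be a finite subset of the closed interval [0,ℓ] (with the metric induced from ℝ) such that X^k converges to [0,ℓ] in the Hausdorff metric as k → ∞. Then the magnitude |X^k| is defined for every k and |X^k| → ℓ/2 + 1 as k → ∞. -/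
/-!
A weighting of a finite `s ⊆ ℝ` extends to `s ∪ {a}`, for `a` beyond the largest point `m`,
by changing only the weights of `m` and `a`: for `x ∈ s` one has
`exp (-d(x, a)) = exp (-d(m, a)) * exp (-d(x, m))`, so it suffices to lower the weight of `m` by
`(1 - g) / 2` and to give `a` the weight `(1 + g) / 2`, where `g = tanh (d(m, a) / 2)`.
Hence every finite `s ⊆ ℝ` has a weighting, and its magnitude (which does not depend on the
weighting, by symmetry of `exp (-d)`) is `1 + ∑ tanh (dᵢ / 2)` over the gaps `dᵢ`. Since
`t - t ^ 3 / 3 ≤ tanh t ≤ t`, when all gaps are at most `δ` the magnitude is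
`1 + (max - min) / 2` up to a relative error `δ ^ 2 / 12`, and Hausdorff convergence to `[0, ℓ]`
forces `δ → 0`, `min → 0` and `max → ℓ`.
-/

open Filter Topology Real

namespace Real

theorem hasDerivAt_tanh (x : ℝ) : HasDerivAt tanh (1 - tanh x ^ 2) x := by
  rw [show tanh = fun y => sinh y / cosh y from funext tanh_eq_sinh_div_cosh]
  refine ((hasDerivAt_sinh x).div (hasDerivAt_cosh x) (cosh_pos x).ne').congr_deriv ?_
  field_simp

theorem exp_neg_two_mul_mul_one_add_tanh (t : ℝ) :
    exp (-(2 * t)) * (1 + tanh t) = 1 - tanh t := by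
  rw [tanh_eq, show -(2 * t) = -t + -t by ring, exp_add, exp_neg]
  field_simp
  ring

theorem tanh_nonneg {t : ℝ} (ht : 0 ≤ t) : 0 ≤ tanh t := by
  rw [tanh_eq_sinh_div_cosh]
  exact div_nonneg (sinh_nonneg_iff.2 ht) (cosh_pos t).le

theorem tanh_le_self {t : ℝ} (ht : 0 ≤ t) : tanh t ≤ t := by
  have hmono : Monotone fun t => t - tanh t :=
    monotone_of_hasDerivAt_nonneg
      (fun x => ((hasDerivAt_id x).sub (hasDerivAt_tanh x)).congr_deriv (sub_sub_cancel 1 _))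
      (fun x => sq_nonneg (tanh x))
  simpa using hmono ht

theorem sub_pow_three_div_three_le_tanh {t : ℝ} (ht : 0 ≤ t) : t - t ^ 3 / 3 ≤ tanh t := by
  have hderiv (x : ℝ) : HasDerivAt (fun t => tanh t - t + t ^ 3 / 3) (x ^ 2 - tanh x ^ 2) x := by
    refine (((hasDerivAt_tanh x).sub (hasDerivAt_id x)).add
      ((hasDerivAt_pow 3 x).div_const 3)).congr_deriv ?_
    simp only [Nat.cast_ofNat]
    ring
  have hmono : MonotoneOn (fun t => tanh t - t + t ^ 3 / 3) (Set.Ici 0) := by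
    refine monotoneOn_of_hasDerivWithinAt_nonneg (convex_Ici 0)
      (fun x _ => (hderiv x).continuousAt.continuousWithinAt)
      (fun x _ => (hderiv x).hasDerivWithinAt) fun x hx => ?_
    rw [interior_Ici] at hx
    exact sub_nonneg.2 (pow_le_pow_left₀ (tanh_nonneg hx.le) (tanh_le_self hx.le) 2)
  have := hmono Set.self_mem_Ici ht ht
  simp only [tanh_zero] at this
  linarith

theorem mul_one_sub_sq_div_three_le_tanh {t c : ℝ} (ht : 0 ≤ t) (htc : t ≤ c) :
    t * (1 - c ^ 2 / 3) ≤ tanh t := by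
  have := sub_pow_three_div_three_le_tanh ht
  nlinarith [mul_le_mul_of_nonneg_left (pow_le_pow_left₀ ht htc 2) ht]

end Real

section

variable {E : Type*} [PseudoMetricSpace E] {s : Finset E} {w w' : E → ℝ}

def IsWeighting (s : Finset E) (w : E → ℝ) : Prop :=
  ∀ x ∈ s, ∑ y ∈ s, exp (-dist x y) * w y = 1

theorem IsWeighting.sum_eq (hw : IsWeighting s w) (hw' : IsWeighting s w') :
    ∑ x ∈ s, w x = ∑ x ∈ s, w' x :=
  calc ∑ x ∈ s, w x = ∑ x ∈ s, (∑ y ∈ s, exp (-dist x y) * w' y) * w x :=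
        Finset.sum_congr rfl fun x hx => by rw [hw' x hx, one_mul]
    _ = ∑ y ∈ s, (∑ x ∈ s, exp (-dist y x) * w x) * w' y := by
        simp only [Finset.sum_mul]
        rw [Finset.sum_comm]
        refine Finset.sum_congr rfl fun y _ => Finset.sum_congr rfl fun x _ => ?_
        rw [dist_comm]
        ring
    _ = ∑ y ∈ s, w' y := Finset.sum_congr rfl fun y hy => by rw [hw y hy, one_mul]

theorem isWeighting_singleton (a : E) : IsWeighting {a} 1 := by
  simp [IsWeighting]

theorem IsWeighting.exists_insert [DecidableEq E] (hw : IsWeighting s w) {m a : E} (hm : m ∈ s)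
    (ha : a ∉ s) (hsep : ∀ y ∈ s, dist a y = dist a m + dist m y) :
    ∃ w', IsWeighting (insert a s) w' ∧
      ∑ x ∈ insert a s, w' x = ∑ x ∈ s, w x + tanh (dist a m / 2) := by
  set g := tanh (dist a m / 2)
  have hg : exp (-dist a m) * (1 + g) = 1 - g := by
    simpa [g, mul_div_cancel₀] using exp_neg_two_mul_mul_one_add_tanh (dist a m / 2)
  let w' : E → ℝ := fun y =>
    if y = a then (1 + g) / 2 else w y + if y = m then (g - 1) / 2 else 0
  have hsum (f : E → ℝ) : ∑ y ∈ insert a s, f y * w' y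
      = f a * ((1 + g) / 2) + ∑ y ∈ s, f y * w y + f m * ((g - 1) / 2) := by
    have hs : ∀ y ∈ s, f y * w' y = f y * w y + if y = m then f m * ((g - 1) / 2) else 0 := by
      intro y hy
      simp only [w', if_neg (ne_of_mem_of_not_mem hy ha)]
      split_ifs with h <;> simp [h, mul_add]
    rw [Finset.sum_insert ha, Finset.sum_congr rfl hs, Finset.sum_add_distrib,
      Finset.sum_ite_eq' s m, if_pos hm, add_assoc]
    simp [w']
  have hexp (x : E) (hx : x ∈ s) : exp (-dist a x) = exp (-dist a m) * exp (-dist m x) := by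
    rw [hsep x hx, ← exp_add]; ring_nf
  refine ⟨w', fun x hx => ?_, ?_⟩
  · rcases Finset.mem_insert.1 hx with rfl | hx
    · rw [hsum, Finset.sum_congr rfl fun y hy => by rw [hexp y hy, mul_assoc], ← Finset.mul_sum,
        hw m hm, dist_self, neg_zero, exp_zero]
      linear_combination hg / 2
    · rw [hsum, hw x hx, dist_comm x a, hexp x hx, dist_comm x m]
      linear_combination exp (-dist m x) * hg / 2
  · have h1 := hsum 1
    simp only [Pi.one_apply, one_mul] at h1
    rw [h1]
    ring

end

theorem IsWeighting.exists_insert_of_forall_lt {s : Finset ℝ} {w : ℝ → ℝ}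
    (hw : IsWeighting s w) (hs : s.Nonempty) {a : ℝ} (ha : ∀ x ∈ s, x < a) :
    ∃ w', IsWeighting (insert a s) w' ∧
      ∑ x ∈ insert a s, w' x = ∑ x ∈ s, w x + tanh ((a - s.max' hs) / 2) := by
  have hm := s.max'_mem hs
  have hdist : dist a (s.max' hs) = a - s.max' hs := by
    rw [Real.dist_eq, abs_of_pos (sub_pos.2 (ha _ hm))]
  rw [← hdist]
  refine hw.exists_insert hm (fun h => (ha a h).false) fun y hy => ?_
  rw [hdist, Real.dist_eq, Real.dist_eq, abs_of_pos (sub_pos.2 (ha y hy)),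
    abs_of_nonneg (sub_nonneg.2 (s.le_max' y hy))]
  ring

theorem exists_isWeighting (s : Finset ℝ) : ∃ w, IsWeighting s w := by
  induction s using Finset.induction_on_max with
  | empty => exact ⟨0, by simp [IsWeighting]⟩
  | insert a s ha ih =>
    rcases s.eq_empty_or_nonempty with rfl | hs
    · exact ⟨1, isWeighting_singleton a⟩
    · obtain ⟨w, hw⟩ := ih
      obtain ⟨w', hw', -⟩ := hw.exists_insert_of_forall_lt hs ha
      exact ⟨w', hw'⟩

theorem IsWeighting.sum_bounds {s : Finset ℝ} (hs : s.Nonempty) {δ : ℝ}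
    (hgap : ∀ x ∈ s, ∀ z ∈ s, x < z → ∃ y ∈ s, x < y ∧ y ≤ x + δ)
    {w : ℝ → ℝ} (hw : IsWeighting s w) :
    (s.max' hs - s.min' hs) / 2 * (1 - δ ^ 2 / 12) ≤ ∑ x ∈ s, w x - 1 ∧
      ∑ x ∈ s, w x - 1 ≤ (s.max' hs - s.min' hs) / 2 := by
  induction s using Finset.induction_on_max generalizing w with
  | empty => exact absurd hs Finset.not_nonempty_empty
  | insert a s ha ih =>
    rcases s.eq_empty_or_nonempty with rfl | hs₀
    · rw [hw.sum_eq (isWeighting_singleton a)]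
      simp
    have hm := s.max'_mem hs₀
    have hgap₀ : ∀ x ∈ s, ∀ z ∈ s, x < z → ∃ y ∈ s, x < y ∧ y ≤ x + δ := by
      intro x hx z hz hxz
      obtain ⟨y, hy, hxy, hyx⟩ :=
        hgap x (s.mem_insert_of_mem hx) z (s.mem_insert_of_mem hz) hxz
      rcases Finset.mem_insert.1 hy with rfl | hy
      · exact ⟨_, hm, hxz.trans_le (s.le_max' z hz), (ha _ hm).le.trans hyx⟩
      · exact ⟨y, hy, hxy, hyx⟩
    have hlast : a - s.max' hs₀ ≤ δ := by
      obtain ⟨y, hy, hxy, hyx⟩ :=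
        hgap _ (s.mem_insert_of_mem hm) a (s.mem_insert_self a) (ha _ hm)
      rcases Finset.mem_insert.1 hy with rfl | hy
      · linarith
      · exact absurd hxy (not_lt.2 (s.le_max' y hy))
    have hmax : (insert a s).max' hs = a := by
      rw [Finset.max'_insert a s hs₀, max_eq_left (ha _ hm).le]
    have hmin : (insert a s).min' hs = s.min' hs₀ := by
      rw [Finset.min'_insert a s hs₀, min_eq_right (ha _ (s.min'_mem hs₀)).le]
    obtain ⟨w₀, hw₀⟩ := exists_isWeighting s
    obtain ⟨w₁, hw₁, hsum⟩ := hw₀.exists_insert_of_forall_lt hs₀ ha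
    obtain ⟨ih_lower, ih_upper⟩ := ih hs₀ hgap₀ hw₀
    have hd : 0 ≤ (a - s.max' hs₀) / 2 := by linarith [ha _ hm]
    have h_upper := tanh_le_self hd
    have h_lower := mul_one_sub_sq_div_three_le_tanh hd (c := δ / 2) (by linarith)
    rw [hw.sum_eq hw₁, hsum, hmax, hmin]
    constructor
    · linear_combination ih_lower + h_lower
    · linarith

theorem IsWeighting.abs_sum_sub_le {ℓ ε : ℝ} (hℓ : 0 ≤ ℓ) {s : Finset ℝ}
    (hsub : ↑s ⊆ Set.Icc 0 ℓ)
    (hdist : Metric.hausdorffEDist (s : Set ℝ) (Set.Icc 0 ℓ) < ENNReal.ofReal ε)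
    {w : ℝ → ℝ} (hw : IsWeighting s w) :
    |∑ x ∈ s, w x - (ℓ / 2 + 1)| ≤ ε + ℓ * ε ^ 2 / 6 := by
  have hnear : ∀ t ∈ Set.Icc 0 ℓ, ∃ y ∈ s, |t - y| < ε := by
    intro t ht
    rw [Metric.hausdorffEDist_comm] at hdist
    obtain ⟨y, hy, hty⟩ := Metric.exists_edist_lt_of_hausdorffEDist_lt ht hdist
    exact ⟨y, hy, edist_lt_ofReal.1 hty⟩
  obtain ⟨y₀, hy₀, hy₀0⟩ := hnear 0 ⟨le_rfl, hℓ⟩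
  obtain ⟨y₁, hy₁, hy₁ℓ⟩ := hnear ℓ ⟨hℓ, le_rfl⟩
  have hs : s.Nonempty := ⟨y₀, hy₀⟩
  have hmin : s.min' hs ≤ ε := by
    have := s.min'_le y₀ hy₀
    rw [abs_lt] at hy₀0
    linarith
  have hmax : ℓ - ε ≤ s.max' hs := by
    have := s.le_max' y₁ hy₁
    rw [abs_lt] at hy₁ℓ
    linarith
  have hmin₀ : 0 ≤ s.min' hs := (hsub (s.min'_mem hs)).1
  have hmaxℓ : s.max' hs ≤ ℓ := (hsub (s.max'_mem hs)).2
  have hgap : ∀ x ∈ s, ∀ z ∈ s, x < z → ∃ y ∈ s, x < y ∧ y ≤ x + 2 * ε := by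
    intro x hx z hz hxz
    by_cases hclose : s.max' hs ≤ x + 2 * ε
    · exact ⟨_, s.max'_mem hs, hxz.trans_le (s.le_max' z hz), hclose⟩
    · have hε : 0 < ε := (abs_nonneg _).trans_lt hy₀0
      obtain ⟨y, hy, hxy⟩ := hnear (x + ε) ⟨by linarith [(hsub hx).1], by linarith⟩
      rw [abs_lt] at hxy
      exact ⟨y, hy, by linarith, by linarith⟩
  obtain ⟨h_lower, h_upper⟩ := hw.sum_bounds hs hgap
  rw [abs_le]
  constructor
  · have hwidth : s.max' hs - s.min' hs ≤ ℓ := by linarith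
    nlinarith [mul_le_mul_of_nonneg_right hwidth (sq_nonneg ε)]
  · nlinarith [sq_nonneg ε]

/-- If `(X^k)` is a sequence of finite subsets of the interval `[0, ℓ]` converging to
`[0, ℓ]` in the Hausdorff metric, then each `X^k` has a weighting (so its magnitude is
defined), and the magnitudes converge to `ℓ/2 + 1`. -/
theorem magnitude_tendsto_interval (ℓ : ℝ) (hℓ : 0 < ℓ) (X : ℕ → Finset ℝ)
    (hsub : ∀ k, ↑(X k) ⊆ Set.Icc (0 : ℝ) ℓ)
    (hconv : Tendsto (fun k => EMetric.hausdorffEdist (↑(X k) : Set ℝ) (Set.Icc (0 : ℝ) ℓ))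
      atTop (𝓝 0)) :
    (∀ k, ∃ w : ℝ → ℝ, ∀ x ∈ X k, ∑ x' ∈ X k, Real.exp (-dist x x') * w x' = 1) ∧
    ∀ w : ℕ → ℝ → ℝ,
      (∀ k, ∀ x ∈ X k, ∑ x' ∈ X k, Real.exp (-dist x x') * w k x' = 1) →
      Tendsto (fun k => ∑ x ∈ X k, w k x) atTop (𝓝 (ℓ / 2 + 1)) := by
  refine ⟨fun k => exists_isWeighting (X k), fun w hw => Metric.tendsto_nhds.2 fun η hη => ?_⟩
  have hbound : Tendsto (fun ε : ℝ => ε + ℓ * ε ^ 2 / 6) (𝓝[>] 0) (𝓝 0) := by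
    have hcont : Continuous fun ε : ℝ => ε + ℓ * ε ^ 2 / 6 := by fun_prop
    simpa using (hcont.tendsto 0).mono_left nhdsWithin_le_nhds
  obtain ⟨ε, hεη, hε⟩ :=
    ((hbound.eventually (gt_mem_nhds hη)).and self_mem_nhdsWithin).exists
  filter_upwards [hconv.eventually (gt_mem_nhds (ENNReal.ofReal_pos.2 hε))] with k hk
  exact (IsWeighting.abs_sum_sub_le hℓ.le (hsub k) hk (hw k)).trans_lt hεη
end

section
/- For ℓ > 0 define |T_ℓ| := 1 + (1/2)·Σ_{i=1}^{∞} 2^i·tanh(ℓ/(2·3^i)), p(ℓ) := (1/2)·Σ_{i=−∞}^{∞} 2^i·tanh(ℓ/(2·3^i)) (a doubly infinite sum, which converges), and q₂(ℓ) := 1 − (1/2)·Σ_{i=0}^{∞} 2^{−i}·tanh(3^i·ℓ/2) (which converges). Then: (1) |T_ℓ| = p(ℓ) + q₂(ℓ) for all ℓ > 0; (2) p(3ℓ) = 2·p(ℓ) for all ℓ > 0; (3) q₂(ℓ) → 0 as ℓ → ∞; (4) p and q₂ are the unique pair of functions on ℝ_{>0} satisfying (1), (2) and (3). -/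
/-!
Splitting the bi-infinite sum of `p` at `i = 0`, the terms with `i ≥ 1` are those of `|T_ℓ|`
and the terms with `i ≤ 0` are `2⁻ⁱ tanh (3ⁱ ℓ / 2)`, whose sum is `2 - 2 q₂(ℓ)`; this gives
`|T_ℓ| = p + q₂`. The relation `p(3ℓ) = 2 p(ℓ)` is the reindexing `i ↦ i + 1`, and `q₂ → 0` by
dominated convergence, since `tanh → 1` and `Σ 2⁻ⁱ = 2`. For uniqueness, the difference `d` of
two admissible `p` satisfies `d(3ⁿ ℓ) = 2ⁿ d(ℓ)` and `d → 0`, so `d = 0`.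
-/

open Filter Topology Real

noncomputable section

namespace Real

lemma tanh_nonneg_s12 {x : ℝ} (hx : 0 ≤ x) : 0 ≤ tanh x := by
  rw [tanh_eq_sinh_div_cosh]
  exact div_nonneg (sinh_nonneg_iff.mpr hx) (cosh_pos x).le

lemma tanh_eq_one_sub_exp_div_one_add_exp (x : ℝ) :
    tanh x = (1 - exp (-(2 * x))) / (1 + exp (-(2 * x))) := by
  have hsplit : exp (-(2 * x)) = exp (-x) / exp x := by rw [← exp_sub]; congr 1; ring
  rw [tanh_eq, hsplit]
  field_simp

lemma tanh_le_two_mul {x : ℝ} (hx : 0 ≤ x) : tanh x ≤ 2 * x := by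
  have hpos := exp_pos (-(2 * x))
  have hle : exp (-(2 * x)) ≤ 1 := exp_le_one_iff.mpr (by linarith)
  calc tanh x ≤ 1 - exp (-(2 * x)) := by
        rw [tanh_eq_one_sub_exp_div_one_add_exp, div_le_iff₀ (by positivity)]
        nlinarith
    _ ≤ 2 * x := by linarith [add_one_le_exp (-(2 * x))]

lemma tendsto_tanh_atTop : Tendsto tanh atTop (𝓝 1) := by
  have hexp : Tendsto (fun x => exp (-(2 * x))) atTop (𝓝 0) :=
    tendsto_exp_neg_atTop_nhds_zero.comp (tendsto_id.const_mul_atTop two_pos)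
  rw [funext tanh_eq_one_sub_exp_div_one_add_exp]
  have h : Tendsto (fun x => (1 - exp (-(2 * x))) / (1 + exp (-(2 * x)))) atTop
      (𝓝 ((1 - 0) / (1 + 0))) :=
    (tendsto_const_nhds.sub hexp).div (tendsto_const_nhds.add hexp) (by norm_num)
  rwa [sub_zero, add_zero, div_one] at h

end Real

-- `cantorMagnitude`, `cantorScalingPart` and `cantorRemainder` are the paper's `|T_ℓ|`, `p` and `q₂`.
def cantorTerm (ℓ : ℝ) (i : ℤ) : ℝ := 2 ^ i * tanh (ℓ / (2 * 3 ^ i))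

def cantorMagnitude (ℓ : ℝ) : ℝ :=
  1 + (1 / 2) * ∑' n : ℕ, (2 : ℝ) ^ (n + 1) * tanh (ℓ / (2 * 3 ^ (n + 1)))

def cantorScalingPart (ℓ : ℝ) : ℝ := (1 / 2) * ∑' i : ℤ, cantorTerm ℓ i

def cantorRemainder (ℓ : ℝ) : ℝ :=
  1 - (1 / 2) * ∑' n : ℕ, ((2 : ℝ) ^ n)⁻¹ * tanh ((3 : ℝ) ^ n * ℓ / 2)

lemma cantorTerm_natCast (ℓ : ℝ) (n : ℕ) :
    cantorTerm ℓ n = 2 ^ n * tanh (ℓ / (2 * 3 ^ n)) := by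
  simp only [cantorTerm, zpow_natCast]

lemma cantorTerm_neg_natCast (ℓ : ℝ) (n : ℕ) :
    cantorTerm ℓ (-n) = (2 ^ n)⁻¹ * tanh (3 ^ n * ℓ / 2) := by
  rw [cantorTerm, zpow_neg, zpow_neg, zpow_natCast, zpow_natCast]
  congr 2
  field_simp

lemma cantorTerm_three_mul_add_one (ℓ : ℝ) (i : ℤ) :
    cantorTerm (3 * ℓ) (i + 1) = 2 * cantorTerm ℓ i := by
  rw [cantorTerm, cantorTerm, zpow_add_one₀ two_ne_zero, zpow_add_one₀ three_ne_zero]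
  have h3 : (3 : ℝ) ^ i ≠ 0 := zpow_ne_zero _ three_ne_zero
  rw [show 3 * ℓ / (2 * (3 ^ i * 3)) = ℓ / (2 * 3 ^ i) by field_simp]
  ring

lemma summable_cantorTerm_natCast {ℓ : ℝ} (hℓ : 0 ≤ ℓ) :
    Summable fun n : ℕ => cantorTerm ℓ n := by
  refine Summable.of_nonneg_of_le (fun n => ?_) (fun n => ?_)
    ((summable_geometric_of_lt_one (by norm_num) (by norm_num : (2 : ℝ) / 3 < 1)).mul_left ℓ)
  · rw [cantorTerm_natCast]
    exact mul_nonneg (by positivity) (tanh_nonneg_s12 (by positivity))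
  · calc cantorTerm ℓ n ≤ 2 ^ n * (2 * (ℓ / (2 * 3 ^ n))) := by
          rw [cantorTerm_natCast]
          exact mul_le_mul_of_nonneg_left (tanh_le_two_mul (by positivity)) (by positivity)
      _ = ℓ * (2 / 3) ^ n := by
          rw [div_pow]
          field_simp

lemma norm_inv_two_pow_mul_tanh_le (n : ℕ) (x : ℝ) : ‖((2 : ℝ) ^ n)⁻¹ * tanh x‖ ≤ (2 ^ n)⁻¹ := by
  rw [norm_mul, norm_inv, norm_pow, Real.norm_two]
  exact mul_le_of_le_one_right (by positivity) (abs_tanh_lt_one x).le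

lemma summable_inv_two_pow : Summable fun n : ℕ => ((2 : ℝ) ^ n)⁻¹ := by
  simpa only [one_div, inv_pow] using summable_geometric_two

lemma summable_inv_two_pow_mul_tanh (ℓ : ℝ) :
    Summable fun n : ℕ => ((2 : ℝ) ^ n)⁻¹ * tanh ((3 : ℝ) ^ n * ℓ / 2) :=
  summable_inv_two_pow.of_norm_bounded fun n => norm_inv_two_pow_mul_tanh_le n _

lemma summable_cantorTerm_neg_natCast (ℓ : ℝ) : Summable fun n : ℕ => cantorTerm ℓ (-n) := by
  simpa only [cantorTerm_neg_natCast] using summable_inv_two_pow_mul_tanh ℓ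

lemma summable_cantorTerm {ℓ : ℝ} (hℓ : 0 ≤ ℓ) : Summable (cantorTerm ℓ) :=
  (summable_cantorTerm_natCast hℓ).of_nat_of_neg (summable_cantorTerm_neg_natCast ℓ)

lemma cantorMagnitude_eq_add {ℓ : ℝ} (hℓ : 0 ≤ ℓ) :
    cantorMagnitude ℓ = cantorScalingPart ℓ + cantorRemainder ℓ := by
  have hsplit :=
    (summable_cantorTerm_natCast hℓ).tsum_of_nat_of_neg (summable_cantorTerm_neg_natCast ℓ)
  rw [(summable_cantorTerm_natCast hℓ).tsum_eq_zero_add] at hsplit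
  have hzero : cantorTerm ℓ 0 = tanh (ℓ / 2) := by simp [cantorTerm]
  simp only [cantorTerm_natCast, cantorTerm_neg_natCast, hzero, pow_zero, one_mul, mul_one]
    at hsplit
  rw [cantorMagnitude, cantorScalingPart, cantorRemainder, hsplit]
  ring

lemma cantorScalingPart_three_mul (ℓ : ℝ) :
    cantorScalingPart (3 * ℓ) = 2 * cantorScalingPart ℓ := by
  rw [cantorScalingPart, cantorScalingPart, ← (Equiv.addRight (1 : ℤ)).tsum_eq]
  simp only [Equiv.coe_addRight, cantorTerm_three_mul_add_one, tsum_mul_left]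
  ring

lemma tendsto_tsum_inv_two_pow_mul_tanh :
    Tendsto (fun ℓ => ∑' n : ℕ, ((2 : ℝ) ^ n)⁻¹ * tanh ((3 : ℝ) ^ n * ℓ / 2)) atTop (𝓝 2) := by
  have hgeom : ∑' n : ℕ, ((2 : ℝ) ^ n)⁻¹ = 2 := by
    simpa only [inv_pow] using tsum_geometric_inv_two
  have hlim : Tendsto (fun ℓ => ∑' n : ℕ, ((2 : ℝ) ^ n)⁻¹ * tanh ((3 : ℝ) ^ n * ℓ / 2)) atTop
      (𝓝 (∑' n : ℕ, ((2 : ℝ) ^ n)⁻¹)) := by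
    refine tendsto_tsum_of_dominated_convergence summable_inv_two_pow (fun n => ?_)
      (Eventually.of_forall fun ℓ n => norm_inv_two_pow_mul_tanh_le n _)
    have harg : Tendsto (fun ℓ : ℝ => 3 ^ n * ℓ / 2) atTop atTop :=
      (tendsto_id.const_mul_atTop (by positivity)).atTop_div_const two_pos
    simpa using (tendsto_tanh_atTop.comp harg).const_mul ((2 : ℝ) ^ n)⁻¹
  rwa [hgeom] at hlim

lemma tendsto_cantorRemainder_atTop : Tendsto cantorRemainder atTop (𝓝 0) := by
  have h := (tendsto_tsum_inv_two_pow_mul_tanh.const_mul (1 / 2)).const_sub 1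
  rwa [show (1 : ℝ) - 1 / 2 * 2 = 0 by norm_num] at h

lemma eq_zero_of_apply_mul_eq_mul_of_tendsto {f : ℝ → ℝ} {a b : ℝ} (ha : 1 < a) (hb : 1 ≤ |b|)
    (hf : ∀ x, 0 < x → f (a * x) = b * f x) (hlim : Tendsto f atTop (𝓝 0)) {x : ℝ}
    (hx : 0 < x) : f x = 0 := by
  have hpow : ∀ n : ℕ, f (a ^ n * x) = b ^ n * f x := by
    intro n
    induction n with
    | zero => simp
    | succ n ih =>
      rw [pow_succ', mul_assoc, hf _ (by positivity), ih]
      ring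
  have hle : ∀ n : ℕ, |f x| ≤ |f (a ^ n * x)| := fun n => by
    rw [hpow, abs_mul, abs_pow]
    exact le_mul_of_one_le_left (abs_nonneg _) (one_le_pow₀ hb)
  have hseq : Tendsto (fun n : ℕ => |f (a ^ n * x)|) atTop (𝓝 0) := by
    simpa using (hlim.comp ((tendsto_pow_atTop_atTop_of_one_lt ha).atTop_mul_const hx)).abs
  exact abs_nonpos_iff.mp (ge_of_tendsto' hseq hle)

lemma eq_and_eq_of_add_eq_add_of_tendsto {a b : ℝ} (ha : 1 < a) (hb : 1 ≤ |b|)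
    {p q p' q' : ℝ → ℝ} (hadd : ∀ x, 0 < x → p x + q x = p' x + q' x)
    (hp : ∀ x, 0 < x → p (a * x) = b * p x) (hp' : ∀ x, 0 < x → p' (a * x) = b * p' x)
    (hq : Tendsto q atTop (𝓝 0)) (hq' : Tendsto q' atTop (𝓝 0)) {x : ℝ} (hx : 0 < x) :
    p x = p' x ∧ q x = q' x := by
  have hdiff : p x - p' x = 0 := by
    refine eq_zero_of_apply_mul_eq_mul_of_tendsto (f := fun y => p y - p' y) ha hb
      (fun y hy => by simp only [hp y hy, hp' y hy]; ring) ?_ hx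
    have hlim := hq'.sub hq
    rw [sub_zero] at hlim
    refine hlim.congr' ((eventually_gt_atTop 0).mono fun y hy => ?_)
    linarith [hadd y hy]
  constructor <;> linarith [hadd x hx]

end

/-- Decomposition of the magnitude of the Cantor set: with
`|T_ℓ| = 1 + ½ Σ_{i=1}^∞ 2^i tanh(ℓ/(2·3^i))`,
`p(ℓ) = ½ Σ_{i=-∞}^∞ 2^i tanh(ℓ/(2·3^i))` (a convergent doubly infinite sum) and
`q₂(ℓ) = 1 − ½ Σ_{i=0}^∞ 2^{−i} tanh(3^i ℓ/2)` (convergent), one has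
(1) `|T_ℓ| = p(ℓ) + q₂(ℓ)`, (2) `p(3ℓ) = 2 p(ℓ)`, (3) `q₂(ℓ) → 0` as `ℓ → ∞`,
and (4) `p, q₂` are the unique pair of functions on the positive reals with these
properties. -/
theorem cantor_magnitude_decomposition (T p q₂ : ℝ → ℝ)
    (hT : ∀ ℓ : ℝ, 0 < ℓ →
      T ℓ = 1 + (1 / 2) * ∑' i : ℕ, (2 : ℝ) ^ (i + 1) * Real.tanh (ℓ / (2 * 3 ^ (i + 1))))
    (hp : ∀ ℓ : ℝ, 0 < ℓ →
      p ℓ = (1 / 2) * ∑' i : ℤ, (2 : ℝ) ^ i * Real.tanh (ℓ / (2 * (3 : ℝ) ^ i)))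
    (hq : ∀ ℓ : ℝ, 0 < ℓ →
      q₂ ℓ = 1 - (1 / 2) * ∑' i : ℕ, ((2 : ℝ) ^ i)⁻¹ * Real.tanh ((3 : ℝ) ^ i * ℓ / 2)) :
    (∀ ℓ : ℝ, 0 < ℓ →
      Summable (fun i : ℤ => (2 : ℝ) ^ i * Real.tanh (ℓ / (2 * (3 : ℝ) ^ i)))) ∧
    (∀ ℓ : ℝ, 0 < ℓ →
      Summable (fun i : ℕ => ((2 : ℝ) ^ i)⁻¹ * Real.tanh ((3 : ℝ) ^ i * ℓ / 2))) ∧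
    (∀ ℓ : ℝ, 0 < ℓ → T ℓ = p ℓ + q₂ ℓ) ∧
    (∀ ℓ : ℝ, 0 < ℓ → p (3 * ℓ) = 2 * p ℓ) ∧
    Tendsto q₂ atTop (𝓝 0) ∧
    (∀ p' q' : ℝ → ℝ,
      (∀ ℓ : ℝ, 0 < ℓ → T ℓ = p' ℓ + q' ℓ) →
      (∀ ℓ : ℝ, 0 < ℓ → p' (3 * ℓ) = 2 * p' ℓ) →
      Tendsto q' atTop (𝓝 0) →
      ∀ ℓ : ℝ, 0 < ℓ → p' ℓ = p ℓ ∧ q' ℓ = q₂ ℓ) := by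
  have hdecomp : ∀ ℓ : ℝ, 0 < ℓ → T ℓ = p ℓ + q₂ ℓ := fun ℓ hℓ => by
    rw [hT ℓ hℓ, hp ℓ hℓ, hq ℓ hℓ]
    exact cantorMagnitude_eq_add hℓ.le
  have hscale : ∀ ℓ : ℝ, 0 < ℓ → p (3 * ℓ) = 2 * p ℓ := fun ℓ hℓ => by
    rw [hp (3 * ℓ) (by positivity), hp ℓ hℓ]
    exact cantorScalingPart_three_mul ℓ
  have hlim : Tendsto q₂ atTop (𝓝 0) :=
    tendsto_cantorRemainder_atTop.congr' <|
      (eventually_gt_atTop 0).mono fun ℓ hℓ => (hq ℓ hℓ).symm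
  refine ⟨fun ℓ hℓ => summable_cantorTerm hℓ.le, fun ℓ _ => summable_inv_two_pow_mul_tanh ℓ,
    hdecomp, hscale, hlim, fun p' q' hdecomp' hscale' hlim' ℓ hℓ => ?_⟩
  obtain ⟨hpp', hqq'⟩ := eq_and_eq_of_add_eq_add_of_tendsto (a := 3) (b := 2) (by norm_num)
    (by norm_num) (fun x hx => (hdecomp x hx).symm.trans (hdecomp' x hx)) hscale hscale' hlim
    hlim' hℓ
  exact ⟨hpp'.symm, hqq'.symm⟩
end

section
/- There exist constants C > 0 and L > 0 such that for all ℓ ≥ L, |∫_0^1 exp(−(ℓ/π)·sin(πs)) ds − 2/ℓ| ≤ C/ℓ³. Consequently, the magnitude |C_ℓ| := (∫_0^1 exp(−(ℓ/π)·sin(πs)) ds)^{−1} of the Euclidean circle of circumference ℓ satisfies |C_ℓ| − ℓ/2 → 0 as ℓ → ∞ (indeed |C_ℓ| = ℓ/2 + O(ℓ^{−1})). -/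
open Filter Topology Asymptotics Real

/-!
Laplace's method. The integrand is symmetric under `s ↦ 1 - s`, and on `[0, 1/2]`
`πs - (πs)³/6 ≤ sin (πs) ≤ πs` while Jordan's inequality gives `sin (πs) ≥ 2s`. Hence
`exp (-(ℓ/π) sin (πs))` differs from `exp (-ℓs)` by at most `(ℓπ²s³/6) exp (-2ℓs/π)`, which is
`O(ℓ⁻²) exp (-ℓs/π)` and integrates to `O(ℓ⁻³)`; meanwhile `2 ∫₀^{1/2} exp (-ℓs) ds` is `2/ℓ`
up to `O(e^{-ℓ/2}/ℓ)`. Inverting `2/ℓ + O(ℓ⁻³)` gives `ℓ/2 + O(ℓ⁻¹)`.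
-/

lemma exp_sub_exp_le_mul_exp (x y : ℝ) : exp x - exp y ≤ (x - y) * exp x := by
  have h : exp y = exp x * exp (y - x) := by rw [← exp_add]; ring_nf
  nlinarith [add_one_le_exp (y - x), exp_pos x]

lemma pow_mul_exp_neg_mul_le {a s : ℝ} (ha : 0 < a) (hs : 0 ≤ s) (n : ℕ) :
    s ^ n * exp (-a * s) ≤ n.factorial / a ^ n := by
  have h := pow_div_factorial_le_exp (a * s) (mul_nonneg ha.le hs) n
  rw [div_le_iff₀ (by positivity)] at h
  rw [neg_mul, exp_neg, ← div_eq_mul_inv, div_le_div_iff₀ (exp_pos _) (by positivity)]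
  calc s ^ n * a ^ n = (a * s) ^ n := by ring
    _ ≤ exp (a * s) * n.factorial := h
    _ = n.factorial * exp (a * s) := mul_comm _ _

lemma integral_exp_neg_mul {a : ℝ} (ha : a ≠ 0) (b : ℝ) :
    ∫ s in (0 : ℝ)..b, exp (-a * s) = (1 - exp (-a * b)) / a := by
  rw [intervalIntegral.integral_comp_mul_left exp (neg_ne_zero.mpr ha), integral_exp,
    mul_zero, exp_zero, smul_eq_mul]
  field_simp
  ring

lemma abs_inv_sub_inv_le_of_abs_sub_le {x y ε : ℝ} (hy : 0 < y) (hxy : |x - y| ≤ ε)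
    (hε : ε ≤ y / 2) : |x⁻¹ - y⁻¹| ≤ 2 * ε / y ^ 2 := by
  have hε₀ : 0 ≤ ε := (abs_nonneg _).trans hxy
  have hx : y / 2 ≤ x := by linarith [(abs_le.mp hxy).1]
  have hx0 : 0 < x := by linarith
  rw [inv_sub_inv hx0.ne' hy.ne', abs_div, abs_sub_comm, abs_of_pos (mul_pos hx0 hy),
    div_le_div_iff₀ (by positivity) (by positivity)]
  calc |x - y| * y ^ 2 ≤ ε * y ^ 2 := by gcongr
    _ ≤ ε * (2 * (x * y)) := by gcongr; nlinarith
    _ = 2 * ε * (x * y) := by ring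

lemma intervalIntegral.integral_eq_two_nsmul_integral_half_of_symm {E : Type*}
    [NormedAddCommGroup E] [NormedSpace ℝ E] {f : ℝ → E} {a b : ℝ}
    (hf : IntervalIntegrable f MeasureTheory.volume a b) (hsymm : ∀ x, f (a + b - x) = f x) :
    ∫ x in a..b, f x = 2 • ∫ x in a..(a + b) / 2, f x := by
  have hmid : (a + b) / 2 ∈ Set.uIcc a b := by
    rcases le_total a b with h | h
    · exact Set.mem_uIcc.mpr (Or.inl ⟨by linarith, by linarith⟩)
    · exact Set.mem_uIcc.mpr (Or.inr ⟨by linarith, by linarith⟩)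
  have hreflect : ∫ x in (a + b) / 2..b, f x = ∫ x in a..(a + b) / 2, f x := by
    calc ∫ x in (a + b) / 2..b, f x = ∫ x in (a + b) / 2..b, f (a + b - x) := by
          simp only [hsymm]
      _ = ∫ x in a..(a + b) / 2, f x := by
          rw [intervalIntegral.integral_comp_sub_left]; congr 1 <;> ring
  rw [← intervalIntegral.integral_add_adjacent_intervals
    (hf.mono_set (Set.uIcc_subset_uIcc_left hmid))
    (hf.mono_set (Set.uIcc_subset_uIcc_right hmid)), hreflect, two_nsmul]

lemma abs_exp_neg_mul_sin_sub_exp_neg_mul_le {ℓ s : ℝ} (hℓ : 0 < ℓ) (hs₀ : 0 ≤ s)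
    (hs₁ : s ≤ 1 / 2) :
    |exp (-(ℓ / π) * sin (π * s)) - exp (-ℓ * s)|
      ≤ π ^ 5 / ℓ ^ 2 * exp (-(ℓ / π) * s) := by
  set a := ℓ / π with ha
  have hπs : 0 ≤ π * s := by positivity
  have hsin_le : sin (π * s) ≤ π * s := sin_le hπs
  have hjordan : 2 * s ≤ sin (π * s) := by
    have h := mul_le_sin hπs (by nlinarith [pi_pos])
    rwa [show 2 / π * (π * s) = 2 * s by field_simp] at h
  have hcube : π * s - sin (π * s) ≤ (π * s) ^ 3 / 6 := by
    linarith [sin_ge_sub_cube hπs]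
  have hle : exp (-ℓ * s) ≤ exp (-a * sin (π * s)) := by
    rw [exp_le_exp, ha]
    have : ℓ / π * sin (π * s) ≤ ℓ / π * (π * s) := by gcongr
    rw [show ℓ / π * (π * s) = ℓ * s by field_simp] at this
    linarith
  rw [abs_of_nonneg (sub_nonneg.mpr hle)]
  calc exp (-a * sin (π * s)) - exp (-ℓ * s)
      ≤ (-a * sin (π * s) - -ℓ * s) * exp (-a * sin (π * s)) := exp_sub_exp_le_mul_exp _ _
    _ ≤ ℓ * π ^ 2 * s ^ 3 / 6 * (exp (-a * s) * exp (-a * s)) := by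
        gcongr
        · calc -a * sin (π * s) - -ℓ * s = a * (π * s - sin (π * s)) := by
                rw [ha]; field_simp; ring
            _ ≤ a * ((π * s) ^ 3 / 6) := by gcongr
            _ = ℓ * π ^ 2 * s ^ 3 / 6 := by rw [ha]; field_simp
        · rw [← exp_add, exp_le_exp]
          nlinarith [show 0 ≤ a by positivity]
    _ = ℓ * π ^ 2 / 6 * (s ^ 3 * exp (-a * s)) * exp (-a * s) := by ring
    _ ≤ ℓ * π ^ 2 / 6 * (Nat.factorial 3 / a ^ 3) * exp (-a * s) := by
        gcongr
        exact pow_mul_exp_neg_mul_le (by positivity) hs₀ 3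
    _ = π ^ 5 / ℓ ^ 2 * exp (-a * s) := by
        rw [ha]; simp only [Nat.factorial]; field_simp; norm_num

lemma abs_integral_exp_neg_mul_sin_sub_integral_exp_neg_mul_le {ℓ : ℝ} (hℓ : 0 < ℓ) :
    |(∫ s in (0 : ℝ)..1 / 2, exp (-(ℓ / π) * sin (π * s)))
        - ∫ s in (0 : ℝ)..1 / 2, exp (-ℓ * s)| ≤ π ^ 6 / ℓ ^ 3 := by
  have hℓπ : 0 < ℓ / π := by positivity
  rw [← intervalIntegral.integral_sub (Continuous.intervalIntegrable (by fun_prop) _ _)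
    (Continuous.intervalIntegrable (by fun_prop) _ _), ← norm_eq_abs]
  calc _ ≤ ∫ s in (0 : ℝ)..1 / 2, π ^ 5 / ℓ ^ 2 * exp (-(ℓ / π) * s) :=
        intervalIntegral.norm_integral_le_of_norm_le (by norm_num)
          (MeasureTheory.ae_of_all _ fun s hs =>
            abs_exp_neg_mul_sin_sub_exp_neg_mul_le hℓ hs.1.le hs.2)
          (Continuous.intervalIntegrable (by fun_prop) _ _)
    _ = π ^ 5 / ℓ ^ 2 * ((1 - exp (-(ℓ / π) * (1 / 2))) / (ℓ / π)) := by
        rw [intervalIntegral.integral_const_mul, integral_exp_neg_mul hℓπ.ne']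
    _ ≤ π ^ 5 / ℓ ^ 2 * (1 / (ℓ / π)) := by
        gcongr
        linarith [exp_pos (-(ℓ / π) * (1 / 2))]
    _ = π ^ 6 / ℓ ^ 3 := by field_simp

lemma abs_integral_exp_neg_mul_sin_sub_two_div_le {ℓ : ℝ} (hℓ : 0 < ℓ) :
    |(∫ s in (0 : ℝ)..1, exp (-(ℓ / π) * sin (π * s))) - 2 / ℓ|
      ≤ (2 * π ^ 6 + 16) / ℓ ^ 3 := by
  have hsymm : ∫ s in (0 : ℝ)..1, exp (-(ℓ / π) * sin (π * s))
      = 2 * ∫ s in (0 : ℝ)..1 / 2, exp (-(ℓ / π) * sin (π * s)) := by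
    have h := intervalIntegral.integral_eq_two_nsmul_integral_half_of_symm
      (f := fun s => exp (-(ℓ / π) * sin (π * s))) (a := 0) (b := 1)
      (Continuous.intervalIntegrable (by fun_prop) _ _)
      (fun x => by rw [show π * (0 + 1 - x) = π - π * x by ring, sin_pi_sub])
    simpa using h
  have hlinear : ∫ s in (0 : ℝ)..1 / 2, exp (-ℓ * s) = (1 - exp (-ℓ * (1 / 2))) / ℓ :=
    integral_exp_neg_mul hℓ.ne' _
  have htail : exp (-ℓ * (1 / 2)) ≤ 8 / ℓ ^ 2 := by
    have h := pow_mul_exp_neg_mul_le hℓ (by norm_num : (0 : ℝ) ≤ 1 / 2) 2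
    rw [le_div_iff₀ (by positivity)] at h
    rw [le_div_iff₀ (by positivity)]
    norm_num [Nat.factorial] at h ⊢
    linarith
  have hhalf := abs_integral_exp_neg_mul_sin_sub_integral_exp_neg_mul_le hℓ
  rw [hsymm]
  set I := ∫ s in (0 : ℝ)..1 / 2, exp (-(ℓ / π) * sin (π * s))
  calc |2 * I - 2 / ℓ|
      = |2 * (I - ∫ s in (0 : ℝ)..1 / 2, exp (-ℓ * s)) - 2 * exp (-ℓ * (1 / 2)) / ℓ| := by
        rw [hlinear]; congr 1; field_simp; ring
    _ ≤ 2 * |I - ∫ s in (0 : ℝ)..1 / 2, exp (-ℓ * s)| + 2 * exp (-ℓ * (1 / 2)) / ℓ := by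
        refine (abs_sub _ _).trans ?_
        have htail₀ : 0 ≤ 2 * exp (-ℓ * (1 / 2)) / ℓ := by positivity
        rw [abs_mul, abs_two, abs_of_nonneg htail₀]
    _ ≤ 2 * (π ^ 6 / ℓ ^ 3) + 2 * (8 / ℓ ^ 2) / ℓ := by gcongr
    _ = (2 * π ^ 6 + 16) / ℓ ^ 3 := by field_simp; ring

lemma inv_integral_exp_neg_mul_sin_sub_half_isBigO :
    (fun ℓ : ℝ => (∫ s in (0 : ℝ)..1, exp (-(ℓ / π) * sin (π * s)))⁻¹ - ℓ / 2)
      =O[atTop] fun ℓ => ℓ⁻¹ := by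
  set C := 2 * π ^ 6 + 16
  refine IsBigO.of_bound (C / 2) ?_
  filter_upwards [eventually_ge_atTop (max 1 C)] with ℓ hℓ
  have h₁ : 1 ≤ ℓ := (le_max_left _ _).trans hℓ
  have hC : C ≤ ℓ := (le_max_right _ _).trans hℓ
  have hℓ₀ : 0 < ℓ := by linarith
  have hε : C / ℓ ^ 3 ≤ 2 / ℓ / 2 := by
    rw [div_le_iff₀ (by positivity)]
    field_simp
    nlinarith
  have h := abs_inv_sub_inv_le_of_abs_sub_le (by positivity)
    (abs_integral_exp_neg_mul_sin_sub_two_div_le hℓ₀) hε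
  rw [inv_div] at h
  rw [norm_eq_abs, norm_eq_abs, abs_inv, abs_of_pos hℓ₀]
  calc _ ≤ 2 * (C / ℓ ^ 3) / (2 / ℓ) ^ 2 := h
    _ = C / 2 * ℓ⁻¹ := by field_simp

/-- Laplace-method asymptotics for the Euclidean circle: there are constants `C, L > 0`
such that `|∫_0^1 exp(−(ℓ/π) sin(πs)) ds − 2/ℓ| ≤ C/ℓ³` for all `ℓ ≥ L`.  Consequently
the magnitude `|C_ℓ| = (∫_0^1 exp(−(ℓ/π) sin(πs)) ds)⁻¹` of the Euclidean circle of
circumference `ℓ` satisfies `|C_ℓ| − ℓ/2 → 0` as `ℓ → ∞`; indeed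
`|C_ℓ| = ℓ/2 + O(ℓ⁻¹)`. -/
theorem euclidean_circle_asymptotics :
    (∃ C > (0 : ℝ), ∃ L > (0 : ℝ), ∀ ℓ ≥ L,
      |(∫ s in (0 : ℝ)..1, Real.exp (-(ℓ / Real.pi) * Real.sin (Real.pi * s))) - 2 / ℓ|
        ≤ C / ℓ ^ 3) ∧
    Tendsto
      (fun ℓ : ℝ =>
        (∫ s in (0 : ℝ)..1, Real.exp (-(ℓ / Real.pi) * Real.sin (Real.pi * s)))⁻¹ - ℓ / 2)
      atTop (𝓝 0) ∧
    (fun ℓ : ℝ =>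
        (∫ s in (0 : ℝ)..1, Real.exp (-(ℓ / Real.pi) * Real.sin (Real.pi * s)))⁻¹ - ℓ / 2)
      =O[atTop] (fun ℓ : ℝ => ℓ⁻¹) := by
  have hO := inv_integral_exp_neg_mul_sin_sub_half_isBigO
  exact ⟨⟨2 * π ^ 6 + 16, by positivity, 1, one_pos,
      fun ℓ hℓ => abs_integral_exp_neg_mul_sin_sub_two_div_le (one_pos.trans_le hℓ)⟩,
    hO.trans_tendsto tendsto_inv_atTop_zero, hO⟩
end

section
/- Fix ℓ > 0. As n → ∞, the magnitude of the n-point equally-spaced approximation to the circle of circumference ℓ with the intrinsic (arc-length) metric converges: n / (Σ_{j=0}^{n−1} exp(−(ℓ/n)·min(j, n−j))) → (ℓ/2)/(1 − exp(−ℓ/2)). -/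
/-!
With `r = exp (-ℓ / n)`, folding the sum at `j = n / 2` turns it into two geometric sums of
about `n / 2` terms each, so that
`(1 - r) * S_n = (1 - r ^ (n / 2 + 1)) + (1 - r ^ (n - n / 2)) - (1 - r)`.
As `n → ∞` both powers of `r` tend to `exp (-ℓ / 2)`, `r → 1`, and `n * (1 - r) → ℓ` (the
derivative of `t ↦ 1 - exp (-ℓ t)` at `0`), hence
`n / S_n = n * (1 - r) / ((1 - r) * S_n) → ℓ / (2 * (1 - exp (-ℓ / 2)))`.
-/

open Filter Topology Finset

theorem sum_range_min_sub_add {M : Type*} [AddCommMonoid M] (f : ℕ → M) (n : ℕ) :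
    ∑ j ∈ range n, f (min j (n - j)) + f 0 =
      ∑ j ∈ range (n / 2 + 1), f j + ∑ j ∈ range (n - n / 2), f j := by
  have hsplit : n + 1 = (n / 2 + 1) + (n - n / 2) := by omega
  calc ∑ j ∈ range n, f (min j (n - j)) + f 0
      = ∑ j ∈ range (n + 1), f (min j (n - j)) := by simp [sum_range_succ]
    _ = ∑ j ∈ range (n / 2 + 1), f (min j (n - j))
          + ∑ k ∈ range (n - n / 2), f (min (n / 2 + 1 + k) (n - (n / 2 + 1 + k))) := by
      rw [hsplit, sum_range_add]
    _ = ∑ j ∈ range (n / 2 + 1), f j + ∑ k ∈ range (n - n / 2), f (n - n / 2 - 1 - k) := by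
      congr 1 <;> refine sum_congr rfl fun j hj => congrArg f ?_ <;> grind
    _ = _ := by rw [sum_range_reflect]

theorem one_sub_mul_sum_range_pow_min_sub {R : Type*} [CommRing R] (r : R) (n : ℕ) :
    (1 - r) * ∑ j ∈ range n, r ^ min j (n - j) =
      (1 - r ^ (n / 2 + 1)) + (1 - r ^ (n - n / 2)) - (1 - r) := by
  have h := congrArg ((1 - r) * ·) (sum_range_min_sub_add (r ^ ·) n)
  simp only [mul_add, mul_neg_geom_sum, pow_zero, mul_one] at h
  linear_combination h

theorem HasDerivAt.tendsto_nat_mul_sub {f : ℝ → ℝ} {f' x : ℝ} (h : HasDerivAt f f' x) :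
    Tendsto (fun n : ℕ => n * (f (x + (n : ℝ)⁻¹) - f x)) atTop (𝓝 f') := by
  simpa [Function.comp_def] using h.tendsto_slope_zero_right.comp
    (tendsto_inv_atTop_nhdsGT_zero.comp tendsto_natCast_atTop_atTop)

theorem tendsto_nat_mul_one_sub_exp_neg_div (ℓ : ℝ) :
    Tendsto (fun n : ℕ => n * (1 - Real.exp (-(ℓ / n)))) atTop (𝓝 ℓ) := by
  have h : HasDerivAt (fun t => 1 - Real.exp (-(ℓ * t))) ℓ 0 := by
    simpa using (((hasDerivAt_id (0 : ℝ)).const_mul ℓ).neg.exp).const_sub 1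
  simpa [div_eq_mul_inv] using h.tendsto_nat_mul_sub

theorem tendsto_div_natCast_nhds_half (u : ℕ → ℕ)
    (hu : ∀ n, n ≤ 2 * u n ∧ 2 * u n ≤ n + 2) :
    Tendsto (fun n : ℕ => (u n : ℝ) / n) atTop (𝓝 (1 / 2)) := by
  refine tendsto_of_tendsto_of_tendsto_of_le_of_le' tendsto_const_nhds
    (by simpa using tendsto_const_nhds.add (tendsto_inv_atTop_nhds_zero_nat (𝕜 := ℝ))) ?_ ?_
  all_goals
    filter_upwards [eventually_gt_atTop 0] with n hn
    have hn' : (0 : ℝ) < n := by exact_mod_cast hn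
    have hl : (n : ℝ) ≤ 2 * u n := by exact_mod_cast (hu n).1
    have hr : 2 * (u n : ℝ) ≤ n + 2 := by exact_mod_cast (hu n).2
  · rw [le_div_iff₀ hn']
    linarith
  · rw [div_le_iff₀ hn', add_mul, inv_mul_cancel₀ hn'.ne']
    linarith

theorem tendsto_exp_neg_div_pow (ℓ : ℝ) {c : ℝ} {u : ℕ → ℕ}
    (hu : Tendsto (fun n : ℕ => (u n : ℝ) / n) atTop (𝓝 c)) :
    Tendsto (fun n : ℕ => Real.exp (-(ℓ / n)) ^ u n) atTop (𝓝 (Real.exp (-(ℓ * c)))) := by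
  refine (hu.const_mul ℓ).neg.rexp.congr fun n => ?_
  rw [← Real.exp_nat_mul]
  ring_nf

/-- The magnitude of `n` equally spaced points on the circle of circumference `ℓ` with
the intrinsic (arc-length) metric, given by Speyer's formula as
`n / Σ_{j=0}^{n-1} exp(−(ℓ/n) · min(j, n−j))`, converges as `n → ∞` to
`(ℓ/2) / (1 − exp(−ℓ/2))`. -/
theorem intrinsic_circle_magnitude_limit (ℓ : ℝ) (hℓ : 0 < ℓ) :
    Tendsto
      (fun n : ℕ => (n : ℝ) /
        ∑ j ∈ Finset.range n, Real.exp (-(ℓ / n) * (min j (n - j) : ℕ)))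
      atTop
      (𝓝 ((ℓ / 2) / (1 - Real.exp (-ℓ / 2)))) := by
  set r : ℕ → ℝ := fun n => Real.exp (-(ℓ / n))
  have hpow : ∀ n m : ℕ, Real.exp (-(ℓ / n) * m) = r n ^ m := fun n m => by
    rw [mul_comm, Real.exp_nat_mul]
  have hr : Tendsto r atTop (𝓝 1) := by
    simpa using (tendsto_const_div_atTop_nhds_zero_nat ℓ).neg.rexp
  have hlo := tendsto_exp_neg_div_pow ℓ
    (tendsto_div_natCast_nhds_half (fun n => n / 2 + 1) fun n => by omega)
  have hhi := tendsto_exp_neg_div_pow ℓ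
    (tendsto_div_natCast_nhds_half (fun n => n - n / 2) fun n => by omega)
  have hden : Tendsto (fun n => (1 - r n ^ (n / 2 + 1)) + (1 - r n ^ (n - n / 2)) - (1 - r n))
      atTop (𝓝 (2 * (1 - Real.exp (-ℓ / 2)))) := by
    convert ((tendsto_const_nhds.sub hlo).add (tendsto_const_nhds.sub hhi)).sub
      (tendsto_const_nhds.sub hr) using 2
    ring_nf
  have hE : 2 * (1 - Real.exp (-ℓ / 2)) ≠ 0 := by
    have : Real.exp (-ℓ / 2) < 1 := Real.exp_lt_one_iff.mpr (by linarith)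
    exact mul_ne_zero two_ne_zero (sub_pos.mpr this).ne'
  rw [div_div]
  refine ((tendsto_nat_mul_one_sub_exp_neg_div ℓ).div hden hE).congr' ?_
  filter_upwards [eventually_gt_atTop 0] with n hn
  have hr1 : 1 - r n ≠ 0 := (sub_pos.mpr <| Real.exp_lt_one_iff.mpr <|
    neg_lt_zero.mpr <| div_pos hℓ (Nat.cast_pos.mpr hn)).ne'
  simp only [Pi.div_apply, hpow, ← one_sub_mul_sum_range_pow_min_sub, mul_comm (1 - r n)]
  exact mul_div_mul_right _ _ hr1
end

section
/- Let 0 < r ≤ R and h = √(R² − r²), and for t ∈ ℝ let P(t) = (r·cos t, r·sin t, h) ∈ ℝ³, so that each P(t) lies on the sphere of radius R centred at the origin. Then for every θ ∈ [0, 2π], the great-circle (spherical) distance between P(0) and P(θ), namely R·arccos(⟨P(0), P(θ)⟩ / R²), equals 2R·arcsin((r/R)·sin(θ/2)). In particular, for the circle of circumference ℓ (so r = ℓ/2π) roundly embedded on a sphere of radius R with relative curvature κ = ℓ²/(4π²R²), the subspace metric between two points at arc-length distance x along the circle is D_{ℓ,κ}(x) = (ℓ/(√κ·π))·arcsin(√κ·sin(πx/ℓ)).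 -/
open Real Set

/-! With `a = (r/R) sin(θ/2)`, the identities `h² = R² − r²` and `cos θ = 1 − 2 sin²(θ/2)` give
`⟨P 0, P θ⟩ / R² = 1 − 2a²`, and `arccos (1 − 2a²) = 2 arcsin a` for `0 ≤ a ≤ 1` because
`cos (2 arcsin a) = 1 − 2a²` with `2 arcsin a ∈ [0, π]`. The `ℓ, κ` form is the substitution
`θ = 2πx/ℓ`, `√κ = r/R`. -/

lemma cos_eq_one_sub_two_mul_sin_half_sq (θ : ℝ) : cos θ = 1 - 2 * sin (θ / 2) ^ 2 := by
  conv_lhs => rw [show θ = 2 * (θ / 2) by ring]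
  rw [cos_two_mul', cos_sq']
  ring

lemma arccos_one_sub_two_mul_sq {a : ℝ} (h0 : 0 ≤ a) (h1 : a ≤ 1) :
    arccos (1 - 2 * a ^ 2) = 2 * arcsin a := by
  have hcos : cos (2 * arcsin a) = 1 - 2 * a ^ 2 := by
    rw [cos_two_mul, cos_arcsin, sq_sqrt (by nlinarith)]
    ring
  rw [← hcos, arccos_cos]
  · linarith [arcsin_nonneg.2 h0]
  · linarith [arcsin_le_pi_div_two a]

lemma arccos_circle_chord {r R θ : ℝ} (hr : 0 ≤ r) (hrR : r ≤ R) (hR : 0 < R)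
    (hθ : θ ∈ Icc 0 (2 * π)) :
    arccos ((r ^ 2 * cos θ + (R ^ 2 - r ^ 2)) / R ^ 2) = 2 * arcsin (r / R * sin (θ / 2)) := by
  have hsin : 0 ≤ sin (θ / 2) :=
    sin_nonneg_of_nonneg_of_le_pi (by linarith [hθ.1]) (by linarith [hθ.2])
  have hrR' : r / R ≤ 1 := (div_le_one hR).2 hrR
  have hcos : (r ^ 2 * cos θ + (R ^ 2 - r ^ 2)) / R ^ 2 = 1 - 2 * (r / R * sin (θ / 2)) ^ 2 := by
    rw [cos_eq_one_sub_two_mul_sin_half_sq]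
    field_simp
    ring
  rw [hcos, arccos_one_sub_two_mul_sq (by positivity)
    (mul_le_one₀ hrR' hsin (sin_le_one _))]

/-- A circle of radius `r` embedded roundly on the sphere of radius `R ≥ r` centred at the
origin of `ℝ³`, as the locus `P t = (r cos t, r sin t, h)` with `h = √(R² − r²)`.  Each
`P t` lies on the sphere, and for `θ ∈ [0, 2π]` the great-circle distance
`R · arccos(⟨P 0, P θ⟩ / R²)` between `P 0` and `P θ` equals `2R · arcsin((r/R) sin(θ/2))`.
In particular, if `ℓ = 2πr` is the circumference and `κ = ℓ²/(4π²R²)` the relative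
curvature, then for `x ∈ [0, ℓ]` the spherical distance between two points at arc-length
distance `x` along the circle is `(ℓ/(√κ·π)) · arcsin(√κ · sin(πx/ℓ))`. -/
theorem spherical_circle_metric (r R h : ℝ) (hr : 0 < r) (hrR : r ≤ R)
    (hh : h = Real.sqrt (R ^ 2 - r ^ 2))
    (P : ℝ → Fin 3 → ℝ)
    (hP : ∀ t, P t = ![r * Real.cos t, r * Real.sin t, h]) :
    (∀ t, (P t 0) ^ 2 + (P t 1) ^ 2 + (P t 2) ^ 2 = R ^ 2) ∧
    (∀ θ ∈ Set.Icc (0 : ℝ) (2 * Real.pi),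
      R * Real.arccos ((P 0 0 * P θ 0 + P 0 1 * P θ 1 + P 0 2 * P θ 2) / R ^ 2)
        = 2 * R * Real.arcsin ((r / R) * Real.sin (θ / 2))) ∧
    (∀ ℓ κ : ℝ, ℓ = 2 * Real.pi * r → κ = ℓ ^ 2 / (4 * Real.pi ^ 2 * R ^ 2) →
      ∀ x ∈ Set.Icc (0 : ℝ) ℓ,
        R * Real.arccos
            ((P 0 0 * P (2 * Real.pi * x / ℓ) 0 + P 0 1 * P (2 * Real.pi * x / ℓ) 1
              + P 0 2 * P (2 * Real.pi * x / ℓ) 2) / R ^ 2)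
          = (ℓ / (Real.sqrt κ * Real.pi)) *
              Real.arcsin (Real.sqrt κ * Real.sin (Real.pi * x / ℓ))) := by
  have hR : 0 < R := hr.trans_le hrR
  have hh2 : h ^ 2 = R ^ 2 - r ^ 2 := by rw [hh, sq_sqrt (by nlinarith)]
  have hinner (θ : ℝ) :
      P 0 0 * P θ 0 + P 0 1 * P θ 1 + P 0 2 * P θ 2 = r ^ 2 * cos θ + (R ^ 2 - r ^ 2) := by
    simp only [hP, Matrix.cons_val_zero, Matrix.cons_val_one, Matrix.cons_val, cos_zero,
      sin_zero, ← hh2]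
    ring
  have hdist : ∀ θ ∈ Icc (0 : ℝ) (2 * π),
      R * arccos ((P 0 0 * P θ 0 + P 0 1 * P θ 1 + P 0 2 * P θ 2) / R ^ 2)
        = 2 * R * arcsin ((r / R) * sin (θ / 2)) := by
    intro θ hθ
    rw [hinner, arccos_circle_chord hr.le hrR hR hθ]
    ring
  refine ⟨fun t => ?_, hdist, ?_⟩
  · simp only [hP, Matrix.cons_val_zero, Matrix.cons_val_one, Matrix.cons_val, hh2]
    linear_combination r ^ 2 * cos_sq_add_sin_sq t
  · rintro ℓ κ rfl rfl x ⟨hx0, hxℓ⟩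
    have hκ : √((2 * π * r) ^ 2 / (4 * π ^ 2 * R ^ 2)) = r / R := by
      rw [show (2 * π * r) ^ 2 / (4 * π ^ 2 * R ^ 2) = (r / R) ^ 2 by field_simp; ring]
      exact sqrt_sq (by positivity)
    have hθ : 2 * π * x / (2 * π * r) ∈ Icc 0 (2 * π) := by
      refine ⟨by positivity, (div_le_iff₀ (by positivity)).2 ?_⟩
      nlinarith [pi_pos]
    rw [hdist _ hθ, hκ, show 2 * π * x / (2 * π * r) / 2 = π * x / (2 * π * r) by ring]
    congr 1
    field_simp
end

section
/- Let D : ℝ → ℝ be infinitely differentiable on a neighbourhood of [0,1] with D(0) = D(1) = 0, D(s) > 0 for all s ∈ (0,1), D′(0) = 1, D′(1) = −1, and D″(0) = D″(1) = 0. Then ∫_0^1 exp(−ℓ·D(s)) ds = 2/ℓ + O(ℓ^{−3}) as ℓ → ∞; consequently (∫_0^1 exp(−ℓ·D(s)) ds)^{−1} − ℓ/2 → 0 as ℓ → ∞ (indeed the reciprocal equals ℓ/2 + O(ℓ^{−1})). -/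
open Filter Topology Asymptotics Set MeasureTheory

lemma cube_le_exp {x : ℝ} (hx : 0 ≤ x) : x ^ 3 ≤ 6 * Real.exp x := by
  have h := Real.sum_le_exp_of_nonneg hx 4
  simp [Finset.sum_range_succ, Nat.factorial] at h
  nlinarith [sq_nonneg x]

lemma sq_le_exp {x : ℝ} (hx : 0 ≤ x) : x ^ 2 ≤ 2 * Real.exp x := by
  have h := Real.sum_le_exp_of_nonneg hx 3
  simp [Finset.sum_range_succ, Nat.factorial] at h
  nlinarith

lemma cube_exp_neg {x : ℝ} (hx : 0 ≤ x) : x ^ 3 * Real.exp (-x) ≤ 6 := by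
  have h := cube_le_exp hx
  rw [Real.exp_neg, mul_inv_le_iff₀ (Real.exp_pos x)]
  linarith

lemma sq_exp_neg {x : ℝ} (hx : 0 ≤ x) : x ^ 2 * Real.exp (-x) ≤ 2 := by
  have h := sq_le_exp hx
  rw [Real.exp_neg, mul_inv_le_iff₀ (Real.exp_pos x)]
  linarith

lemma abs_exp_neg_sub (a b : ℝ) :
    |Real.exp (-a) - Real.exp (-b)| ≤ |a - b| * Real.exp (-min a b) := by
  wlog hab : a ≤ b generalizing a b
  · rw [abs_sub_comm, abs_sub_comm a b, min_comm]
    exact this _ _ (le_of_not_ge hab)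
  have hexp : Real.exp (-b) ≤ Real.exp (-a) := Real.exp_le_exp.2 (by linarith)
  rw [min_eq_left hab, abs_of_nonpos (sub_nonpos.2 hab), abs_of_nonneg (sub_nonneg.2 hexp)]
  have h2 : 1 - (b - a) ≤ Real.exp (-(b - a)) := by
    have := Real.add_one_le_exp (-(b - a)); linarith
  have h3 : Real.exp (-b) = Real.exp (-a) * Real.exp (-(b - a)) := by
    rw [← Real.exp_add]; ring_nf
  rw [h3]
  nlinarith [Real.exp_pos (-a)]

lemma iterOpen (f : ℝ → ℝ) {U : Set ℝ} (hU : IsOpen U) (n : ℕ) {y : ℝ} (hy : y ∈ U) :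
    iteratedDerivWithin n f U y = iteratedDeriv n f y := by
  rw [iteratedDerivWithin_eq_iteratedFDerivWithin, iteratedDeriv_eq_iteratedFDeriv,
    iteratedFDerivWithin_of_isOpen n hU hy]

lemma iterIcc (f : ℝ → ℝ) {U : Set ℝ} (hU : IsOpen U) (hf : ContDiffOn ℝ (⊤ : ℕ∞) f U)
    {a b : ℝ} (hab : a < b) (hsub : Icc a b ⊆ U) (n : ℕ) {y : ℝ} (hy : y ∈ Icc a b) :
    iteratedDerivWithin n f (Icc a b) y = iteratedDeriv n f y := by
  have hcd : ContDiffOn ℝ n f U := hf.of_le (by exact_mod_cast le_top)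
  have h1 := (hcd.ftaylorSeriesWithin hU.uniqueDiffOn).mono hsub
  have h3 := h1.eq_iteratedFDerivWithin_of_uniqueDiffOn le_rfl (uniqueDiffOn_Icc hab) hy
  have h4 : ftaylorSeriesWithin ℝ f U y n = iteratedFDeriv ℝ n f y :=
    iteratedFDerivWithin_of_isOpen n hU (hsub hy)
  rw [iteratedDerivWithin_eq_iteratedFDerivWithin, iteratedDeriv_eq_iteratedFDeriv, ← h3, h4]

lemma taylor_est (D : ℝ → ℝ) (U : Set ℝ) (hU : IsOpen U) (hIccU : Icc (0:ℝ) 1 ⊆ U)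
    (hsmooth : ContDiffOn ℝ (⊤ : ℕ∞) D U) (hD0 : D 0 = 0) (hD'0 : deriv D 0 = 1)
    (hD''0 : deriv (deriv D) 0 = 0) :
    ∃ C : ℝ, 0 ≤ C ∧ ∀ x ∈ Icc (0:ℝ) 1, |D x - x| ≤ C * x ^ 3 := by
  have hcont : ContinuousOn (iteratedDeriv 3 D) U := by
    have h := hsmooth.continuousOn_iteratedDerivWithin (m := 3) (WithTop.coe_le_coe.2 (le_top : (3:ℕ∞) ≤ ⊤)) hU.uniqueDiffOn
    exact h.congr fun y hy => (iterOpen D hU 3 hy).symm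
  obtain ⟨M, hM⟩ :=
    (isCompact_Icc (a := (0:ℝ)) (b := 1)).exists_bound_of_continuousOn (hcont.mono hIccU)
  have hM0 : 0 ≤ M := (norm_nonneg _).trans (hM 0 (by norm_num))
  refine ⟨M / 6, by positivity, ?_⟩
  rintro x ⟨hx0, hx1⟩
  rcases eq_or_lt_of_le hx0 with rfl | hx0
  · simp [hD0]
  have hsub : Icc (0:ℝ) x ⊆ U := (Icc_subset_Icc le_rfl hx1).trans hIccU
  have hf : ContDiffOn ℝ 2 D (Icc 0 x) := (hsmooth.of_le (WithTop.coe_le_coe.2 (le_top : (2:ℕ∞) ≤ ⊤))).mono hsub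
  have hf' : DifferentiableOn ℝ (iteratedDerivWithin 2 D (Icc 0 x)) (Ioo 0 x) := by
    refine ((hsmooth.mono hsub).differentiableOn_iteratedDerivWithin (m := 2) ?_
      (uniqueDiffOn_Icc hx0)).mono Ioo_subset_Icc_self
    exact WithTop.coe_lt_coe.2 (ENat.coe_lt_top 2)
  obtain ⟨x', hx', hrem⟩ := taylor_mean_remainder_lagrange (n := 2) hx0.ne
    (by rwa [uIcc_of_le hx0.le]) (by rwa [uIcc_of_le hx0.le, uIoo_of_le hx0.le])
  rw [uIcc_of_le hx0.le] at hrem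
  rw [uIoo_of_le hx0.le] at hx'
  have h0mem : (0:ℝ) ∈ Icc (0:ℝ) x := left_mem_Icc.2 hx0.le
  have e0 : iteratedDerivWithin 0 D (Icc 0 x) 0 = 0 := by
    rw [iterIcc D hU hsmooth hx0 hsub 0 h0mem]; simpa using hD0
  have e1 : iteratedDerivWithin 1 D (Icc 0 x) 0 = 1 := by
    rw [iterIcc D hU hsmooth hx0 hsub 1 h0mem, iteratedDeriv_one]; exact hD'0
  have e2 : iteratedDerivWithin 2 D (Icc 0 x) 0 = 0 := by
    rw [iterIcc D hU hsmooth hx0 hsub 2 h0mem, iteratedDeriv_succ, iteratedDeriv_one]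
    exact hD''0
  have hP : taylorWithinEval D 2 (Icc 0 x) 0 x = x := by
    rw [taylor_within_apply]
    simp [Finset.sum_range_succ, e0, e1, e2]
  rw [hP] at hrem
  have e3 : iteratedDerivWithin 3 D (Icc 0 x) x' = iteratedDeriv 3 D x' :=
    iterIcc D hU hsmooth hx0 hsub 3 (Ioo_subset_Icc_self hx')
  have hx'mem : x' ∈ Icc (0:ℝ) 1 := ⟨hx'.1.le, hx'.2.le.trans hx1⟩
  have hMx' : |iteratedDeriv 3 D x'| ≤ M := hM x' hx'mem
  rw [hrem, e3]
  have hx3 : (0:ℝ) ≤ x ^ 3 := by positivity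
  rw [abs_div, abs_mul]
  have h5 : |(x - 0) ^ 3| = x ^ 3 := by rw [sub_zero, abs_of_nonneg hx3]
  rw [h5]
  have hfac : |((((2:ℕ) + 1).factorial : ℕ) : ℝ)| = 6 := by norm_num [Nat.factorial]
  rw [hfac]
  calc |iteratedDeriv 3 D x'| * x ^ 3 / 6 ≤ M * x ^ 3 / 6 := by gcongr
  _ = M / 6 * x ^ 3 := by ring

lemma integral_exp_neg_mul_s19 (c δ : ℝ) (hc : 0 < c) :
    ∫ s in (0:ℝ)..δ, Real.exp (-c * s) = (1 - Real.exp (-c * δ)) / c := by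
  have h : ∀ x ∈ uIcc (0:ℝ) δ, HasDerivAt (fun s => -Real.exp (-c * s) / c)
      (Real.exp (-c * x)) x := by
    intro x _
    have h1 : HasDerivAt (fun s : ℝ => -c * s) (-c) x := by
      simpa using (hasDerivAt_id x).const_mul (-c)
    have h2 := h1.exp.neg.div_const c
    refine HasDerivAt.congr_deriv h2 ?_
    field_simp
  rw [intervalIntegral.integral_eq_sub_of_hasDerivAt h
    ((Real.continuous_exp.comp (continuous_const.mul continuous_id)).intervalIntegrable 0 δ)]
  rw [mul_zero, Real.exp_zero]
  field_simp
  ring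

lemma side_est (f : ℝ → ℝ) (C δ : ℝ) (hC : 0 ≤ C) (hδ0 : 0 < δ) (hδ1 : δ ≤ 1)
    (hcont : ContinuousOn f (Icc 0 1))
    (htay : ∀ x ∈ Icc (0:ℝ) δ, |f x - x| ≤ C * x ^ 3)
    (hlb : ∀ x ∈ Icc (0:ℝ) δ, x / 2 ≤ f x)
    {ℓ : ℝ} (hℓ : 1 ≤ ℓ) :
    |(∫ s in (0:ℝ)..δ, Real.exp (-ℓ * f s)) - 1 / ℓ| ≤ (1536 * C + 2 / δ ^ 2) * ℓ⁻¹ ^ 3 := by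
  have hℓ0 : (0:ℝ) < ℓ := lt_of_lt_of_le one_pos hℓ
  have hsub : Icc (0:ℝ) δ ⊆ Icc (0:ℝ) 1 := Icc_subset_Icc le_rfl hδ1
  have hFc : ContinuousOn (fun s => Real.exp (-ℓ * f s)) (uIcc (0:ℝ) δ) := by
    rw [uIcc_of_le hδ0.le]
    exact Real.continuous_exp.comp_continuousOn (continuousOn_const.mul (hcont.mono hsub))
  have hFi : IntervalIntegrable (fun s => Real.exp (-ℓ * f s)) volume 0 δ :=
    hFc.intervalIntegrable
  have hgc : Continuous fun s : ℝ => Real.exp (-ℓ * s) :=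
    Real.continuous_exp.comp (continuous_const.mul continuous_id)
  have hgi := hgc.intervalIntegrable (μ := volume) 0 δ
  have hhc : Continuous fun s : ℝ => 384 * C * ℓ⁻¹ ^ 2 * Real.exp (-(ℓ/4) * s) :=
    continuous_const.mul (Real.continuous_exp.comp (continuous_const.mul continuous_id))
  have hpt : ∀ s ∈ Icc (0:ℝ) δ, |Real.exp (-ℓ * f s) - Real.exp (-ℓ * s)|
      ≤ 384 * C * ℓ⁻¹ ^ 2 * Real.exp (-(ℓ/4) * s) := by
    rintro s ⟨hs0, hsδ⟩
    have h1 := abs_exp_neg_sub (ℓ * f s) (ℓ * s)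
    have e1 : -ℓ * f s = -(ℓ * f s) := by ring
    have e2 : -ℓ * s = -(ℓ * s) := by ring
    rw [e1, e2]
    refine h1.trans ?_
    have hmin : ℓ * (s/2) ≤ min (ℓ * f s) (ℓ * s) :=
      le_min (mul_le_mul_of_nonneg_left (hlb s ⟨hs0, hsδ⟩) hℓ0.le)
        (mul_le_mul_of_nonneg_left (by linarith) hℓ0.le)
    have hexp : Real.exp (-min (ℓ * f s) (ℓ * s)) ≤ Real.exp (-(ℓ * (s/2))) :=
      Real.exp_le_exp.2 (by linarith)
    have habs : |ℓ * f s - ℓ * s| ≤ ℓ * (C * s ^ 3) := by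
      rw [show ℓ * f s - ℓ * s = ℓ * (f s - s) by ring, abs_mul, abs_of_pos hℓ0]
      exact mul_le_mul_of_nonneg_left (htay s ⟨hs0, hsδ⟩) hℓ0.le
    have hx : 0 ≤ ℓ/4 * s := by positivity
    have h2 : s ^ 3 * Real.exp (-(ℓ/4) * s) ≤ 384 * ℓ⁻¹ ^ 3 := by
      have hb := cube_exp_neg hx
      calc s ^ 3 * Real.exp (-(ℓ/4) * s)
          = ((ℓ/4 * s) ^ 3 * Real.exp (-(ℓ/4 * s))) * (4 ^ 3 * ℓ⁻¹ ^ 3) := by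
            rw [show -(ℓ/4) * s = -(ℓ/4 * s) by ring]
            field_simp
        _ ≤ 6 * (4 ^ 3 * ℓ⁻¹ ^ 3) := mul_le_mul_of_nonneg_right hb (by positivity)
        _ = 384 * ℓ⁻¹ ^ 3 := by ring
    have hsplit : Real.exp (-(ℓ * (s/2))) = Real.exp (-(ℓ/4) * s) * Real.exp (-(ℓ/4) * s) := by
      rw [← Real.exp_add]; ring_nf
    calc |ℓ * f s - ℓ * s| * Real.exp (-min (ℓ * f s) (ℓ * s))
        ≤ (ℓ * (C * s ^ 3)) * Real.exp (-(ℓ * (s/2))) :=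
          mul_le_mul habs hexp (Real.exp_pos _).le (by positivity)
      _ = (C * ℓ) * (s ^ 3 * Real.exp (-(ℓ/4) * s)) * Real.exp (-(ℓ/4) * s) := by
          rw [hsplit]; ring
      _ ≤ (C * ℓ) * (384 * ℓ⁻¹ ^ 3) * Real.exp (-(ℓ/4) * s) :=
          mul_le_mul_of_nonneg_right (mul_le_mul_of_nonneg_left h2 (by positivity))
            (Real.exp_pos _).le
      _ = 384 * C * (ℓ * ℓ⁻¹ ^ 3) * Real.exp (-(ℓ/4) * s) := by ring
      _ = 384 * C * ℓ⁻¹ ^ 2 * Real.exp (-(ℓ/4) * s) := by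
          have hinv : ℓ * ℓ⁻¹ ^ 3 = ℓ⁻¹ ^ 2 := by
            rw [pow_succ', ← mul_assoc, mul_inv_cancel₀ hℓ0.ne', one_mul]
          rw [hinv]
  have hint1 : ∫ s in (0:ℝ)..δ, Real.exp (-ℓ * s) = (1 - Real.exp (-ℓ * δ)) / ℓ :=
    integral_exp_neg_mul_s19 ℓ δ hℓ0
  have hint2 : ∫ s in (0:ℝ)..δ, Real.exp (-(ℓ/4) * s)
      = (1 - Real.exp (-(ℓ/4) * δ)) / (ℓ/4) := integral_exp_neg_mul_s19 _ δ (by positivity)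
  have hA : |(∫ s in (0:ℝ)..δ, Real.exp (-ℓ * f s)) - ∫ s in (0:ℝ)..δ, Real.exp (-ℓ * s)|
      ≤ 1536 * C * ℓ⁻¹ ^ 3 := by
    rw [← intervalIntegral.integral_sub hFi hgi]
    have habs := intervalIntegral.abs_integral_le_integral_abs (μ := volume)
      (f := fun s => Real.exp (-ℓ * f s) - Real.exp (-ℓ * s)) hδ0.le
    refine habs.trans ?_
    have hmono : (∫ s in (0:ℝ)..δ, |Real.exp (-ℓ * f s) - Real.exp (-ℓ * s)|)
        ≤ ∫ s in (0:ℝ)..δ, 384 * C * ℓ⁻¹ ^ 2 * Real.exp (-(ℓ/4) * s) :=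
      intervalIntegral.integral_mono_on hδ0.le ((hFi.sub hgi).abs)
        (hhc.intervalIntegrable 0 δ) hpt
    refine hmono.trans ?_
    rw [intervalIntegral.integral_const_mul, hint2]
    have hb : (1 - Real.exp (-(ℓ/4) * δ)) / (ℓ/4) ≤ 4 / ℓ := by
      rw [div_le_div_iff₀ (by positivity) hℓ0]
      have := (Real.exp_pos (-(ℓ/4) * δ)).le
      nlinarith
    calc 384 * C * ℓ⁻¹ ^ 2 * ((1 - Real.exp (-(ℓ/4) * δ)) / (ℓ/4))
        ≤ 384 * C * ℓ⁻¹ ^ 2 * (4 / ℓ) := mul_le_mul_of_nonneg_left hb (by positivity)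
      _ = 1536 * C * ℓ⁻¹ ^ 3 := by field_simp; ring
  have hB : |(∫ s in (0:ℝ)..δ, Real.exp (-ℓ * s)) - 1 / ℓ| ≤ 2 / δ ^ 2 * ℓ⁻¹ ^ 3 := by
    rw [hint1]
    have hsq := sq_exp_neg (x := ℓ * δ) (by positivity)
    have he : Real.exp (-ℓ * δ) ≤ 2 / (ℓ * δ) ^ 2 := by
      rw [show -ℓ * δ = -(ℓ * δ) by ring, le_div_iff₀ (by positivity), mul_comm]
      exact hsq
    have heq : (1 - Real.exp (-ℓ * δ)) / ℓ - 1 / ℓ = -(Real.exp (-ℓ * δ) / ℓ) := by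
      field_simp
      ring
    rw [heq, abs_neg, abs_of_pos (by positivity)]
    calc Real.exp (-ℓ * δ) / ℓ ≤ (2 / (ℓ * δ) ^ 2) / ℓ := by gcongr
      _ = 2 / δ ^ 2 * ℓ⁻¹ ^ 3 := by field_simp
  calc |(∫ s in (0:ℝ)..δ, Real.exp (-ℓ * f s)) - 1 / ℓ|
      ≤ |(∫ s in (0:ℝ)..δ, Real.exp (-ℓ * f s)) - ∫ s in (0:ℝ)..δ, Real.exp (-ℓ * s)|
        + |(∫ s in (0:ℝ)..δ, Real.exp (-ℓ * s)) - 1 / ℓ| := abs_sub_le _ _ _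
  _ ≤ 1536 * C * ℓ⁻¹ ^ 3 + 2 / δ ^ 2 * ℓ⁻¹ ^ 3 := add_le_add hA hB
  _ = (1536 * C + 2 / δ ^ 2) * ℓ⁻¹ ^ 3 := by ring

set_option maxHeartbeats 1000000 in
/-- The Laplace-method estimate: if `D` is infinitely differentiable on an open
neighbourhood `U` of `[0,1]` with `D(0) = D(1) = 0`, `D > 0` on `(0,1)`, `D′(0) = 1`,
`D′(1) = −1` and `D″(0) = D″(1) = 0`, then `∫_0^1 exp(−ℓ·D(s)) ds = 2/ℓ + O(ℓ⁻³)` as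
`ℓ → ∞`; consequently `(∫_0^1 exp(−ℓ·D(s)) ds)⁻¹ − ℓ/2 → 0` as `ℓ → ∞`, and indeed the
reciprocal equals `ℓ/2 + O(ℓ⁻¹)`. -/
theorem laplace_method_estimate (D : ℝ → ℝ) (U : Set ℝ) (hU : IsOpen U)
    (hIccU : Set.Icc (0 : ℝ) 1 ⊆ U) (hsmooth : ContDiffOn ℝ (⊤ : ℕ∞) D U)
    (hD0 : D 0 = 0) (hD1 : D 1 = 0)
    (hDpos : ∀ s ∈ Set.Ioo (0 : ℝ) 1, 0 < D s)
    (hD'0 : deriv D 0 = 1) (hD'1 : deriv D 1 = -1)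
    (hD''0 : deriv (deriv D) 0 = 0) (hD''1 : deriv (deriv D) 1 = 0) :
    ((fun ℓ : ℝ => (∫ s in (0 : ℝ)..1, Real.exp (-ℓ * D s)) - 2 / ℓ)
        =O[atTop] fun ℓ : ℝ => ℓ⁻¹ ^ 3) ∧
    Tendsto (fun ℓ : ℝ => (∫ s in (0 : ℝ)..1, Real.exp (-ℓ * D s))⁻¹ - ℓ / 2)
      atTop (𝓝 0) ∧
    ((fun ℓ : ℝ => (∫ s in (0 : ℝ)..1, Real.exp (-ℓ * D s))⁻¹ - ℓ / 2)
        =O[atTop] fun ℓ : ℝ => ℓ⁻¹) := by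
  have hDc : ContinuousOn D (Icc 0 1) := hsmooth.continuousOn.mono hIccU
  obtain ⟨C₁, hC₁0, hC₁⟩ := taylor_est D U hU hIccU hsmooth hD0 hD'0 hD''0
  -- the reflected function
  have hVopen : IsOpen ((fun s : ℝ => 1 - s) ⁻¹' U) :=
    hU.preimage (continuous_const.sub continuous_id)
  have hIccV : Icc (0:ℝ) 1 ⊆ (fun s : ℝ => 1 - s) ⁻¹' U := fun s hs =>
    hIccU ⟨by simp; linarith [hs.2], by simp; linarith [hs.1]⟩
  have hEsmooth : ContDiffOn ℝ (⊤ : ℕ∞) (fun s => D (1 - s)) ((fun s : ℝ => 1 - s) ⁻¹' U) :=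
    hsmooth.comp ((contDiff_const.sub contDiff_id).contDiffOn) (mapsTo_preimage _ _)
  have hE0 : D (1 - (0:ℝ)) = 0 := by norm_num [hD1]
  have hE'fun : deriv (fun s => D (1 - s)) = fun s => -deriv D (1 - s) :=
    funext fun s => deriv_comp_const_sub D 1 s
  have hE'0 : deriv (fun s => D (1 - s)) 0 = 1 := by
    rw [hE'fun]; norm_num [hD'1]
  have hE''0 : deriv (deriv (fun s => D (1 - s))) 0 = 0 := by
    rw [hE'fun]
    have : deriv (fun s => -deriv D (1 - s)) 0 = -deriv (fun s => deriv D (1 - s)) 0 := by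
      simp [deriv.neg]
    rw [this, deriv_comp_const_sub (deriv D) 1 0]
    norm_num [hD''1]
  obtain ⟨C₂, hC₂0, hC₂⟩ := taylor_est (fun s => D (1 - s)) _ hVopen hIccV hEsmooth
    (by simpa using hE0) hE'0 hE''0
  set C : ℝ := max C₁ C₂ with hCdef
  have hC0 : 0 ≤ C := le_trans hC₁0 (le_max_left _ _)
  set δ : ℝ := min (1/2 : ℝ) (1 / (2 * C + 2)) with hδdef
  have hδ0 : 0 < δ := lt_min (by norm_num) (by positivity)
  have hδhalf : δ ≤ 1/2 := min_le_left _ _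
  have hδ1 : δ ≤ 1 := hδhalf.trans (by norm_num)
  have hCδ : C * δ ^ 2 ≤ 1/2 := by
    have h1 : δ ≤ 1 / (2 * C + 2) := min_le_right _ _
    have h2 : 0 < 2 * C + 2 := by linarith
    have h3 : δ * (2 * C + 2) ≤ 1 := by
      rw [← le_div_iff₀ h2]; exact h1
    nlinarith [hδ0.le, sq_nonneg δ]
  -- taylor and lower bounds on [0, δ]
  have htay1 : ∀ x ∈ Icc (0:ℝ) δ, |D x - x| ≤ C * x ^ 3 := fun x hx =>
    (hC₁ x ⟨hx.1, hx.2.trans hδ1⟩).trans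
      (mul_le_mul_of_nonneg_right (le_max_left _ _) (pow_nonneg hx.1 3))
  have htay2 : ∀ x ∈ Icc (0:ℝ) δ, |D (1 - x) - x| ≤ C * x ^ 3 := fun x hx =>
    (hC₂ x ⟨hx.1, hx.2.trans hδ1⟩).trans
      (mul_le_mul_of_nonneg_right (le_max_right _ _) (pow_nonneg hx.1 3))
  have hlb : ∀ (f : ℝ → ℝ), (∀ x ∈ Icc (0:ℝ) δ, |f x - x| ≤ C * x ^ 3) →
      ∀ x ∈ Icc (0:ℝ) δ, x / 2 ≤ f x := by
    rintro f hf x ⟨hx0, hxδ⟩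
    have h := hf x ⟨hx0, hxδ⟩
    have hxsq : x ^ 2 ≤ δ ^ 2 := by nlinarith
    have hx2 : C * x ^ 2 ≤ 1/2 :=
      le_trans (mul_le_mul_of_nonneg_left hxsq hC0) hCδ
    nlinarith [abs_le.1 h]
  have hlb1 := hlb D htay1
  have hlb2 := hlb (fun s => D (1 - s)) htay2
  -- continuity of the reflected function on [0,1]
  have hEc : ContinuousOn (fun s => D (1 - s)) (Icc 0 1) := by
    apply hDc.comp (continuous_const.sub continuous_id).continuousOn
    rintro x ⟨h0, h1⟩
    exact ⟨by simp; linarith, by simp; linarith⟩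
  -- minimum of D on the middle interval
  have hKsub : Icc δ (1 - δ) ⊆ Ioo (0:ℝ) 1 := fun x hx =>
    ⟨lt_of_lt_of_le hδ0 hx.1, lt_of_le_of_lt hx.2 (by linarith)⟩
  have hKsub' : Icc δ (1 - δ) ⊆ Icc (0:ℝ) 1 := hKsub.trans Ioo_subset_Icc_self
  obtain ⟨z, hzK, hzmin⟩ := isCompact_Icc.exists_isMinOn
    (⟨δ, le_refl δ, by linarith⟩ : (Icc δ (1 - δ)).Nonempty) (hDc.mono hKsub')
  set m : ℝ := D z with hmdef
  have hm0 : 0 < m := hDpos z (hKsub hzK)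
  set A : ℝ := (1536 * C + 2 / δ ^ 2) * 2 + 6 / m ^ 3 with hAdef
  have hA0 : 0 ≤ A := by positivity
  -- the key uniform estimate
  have key : ∀ ℓ : ℝ, 1 ≤ ℓ →
      |(∫ s in (0:ℝ)..1, Real.exp (-ℓ * D s)) - 2 / ℓ| ≤ A * ℓ⁻¹ ^ 3 := by
    intro ℓ hℓ
    have hℓ0 : (0:ℝ) < ℓ := lt_of_lt_of_le one_pos hℓ
    have hFc : ContinuousOn (fun s => Real.exp (-ℓ * D s)) (Icc 0 1) :=
      Real.continuous_exp.comp_continuousOn (continuousOn_const.mul hDc)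
    have hFint : ∀ a b : ℝ, a ∈ Icc (0:ℝ) 1 → b ∈ Icc (0:ℝ) 1 →
        IntervalIntegrable (fun s => Real.exp (-ℓ * D s)) volume a b := by
      intro a b ha hb
      refine (hFc.mono ?_).intervalIntegrable
      calc uIcc a b ⊆ uIcc 0 1 := uIcc_subset_uIcc
            (by rwa [uIcc_of_le (by norm_num : (0:ℝ) ≤ 1)])
            (by rwa [uIcc_of_le (by norm_num : (0:ℝ) ≤ 1)])
        _ = Icc 0 1 := uIcc_of_le (by norm_num)
    have hmem0 : (0:ℝ) ∈ Icc (0:ℝ) 1 := by norm_num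
    have hmemδ : δ ∈ Icc (0:ℝ) 1 := ⟨hδ0.le, hδ1⟩
    have hmem1δ : 1 - δ ∈ Icc (0:ℝ) 1 := ⟨by linarith, by linarith⟩
    have hmem1 : (1:ℝ) ∈ Icc (0:ℝ) 1 := by norm_num
    have hsplit : (∫ s in (0:ℝ)..1, Real.exp (-ℓ * D s))
        = (∫ s in (0:ℝ)..δ, Real.exp (-ℓ * D s))
          + (∫ s in δ..(1-δ), Real.exp (-ℓ * D s))
          + (∫ s in (1-δ)..1, Real.exp (-ℓ * D s)) := by
      rw [intervalIntegral.integral_add_adjacent_intervals (hFint 0 δ hmem0 hmemδ)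
        (hFint δ (1-δ) hmemδ hmem1δ),
        intervalIntegral.integral_add_adjacent_intervals (hFint 0 (1-δ) hmem0 hmem1δ)
        (hFint (1-δ) 1 hmem1δ hmem1)]
    have hflip : (∫ s in (1-δ)..1, Real.exp (-ℓ * D s))
        = ∫ s in (0:ℝ)..δ, Real.exp (-ℓ * D (1 - s)) := by
      have h := intervalIntegral.integral_comp_sub_left (a := (0:ℝ)) (b := δ)
        (fun s => Real.exp (-ℓ * D s)) 1
      rw [sub_zero] at h
      exact h.symm
    -- side estimates
    have hS1 := side_est D C δ hC0 hδ0 hδ1 hDc htay1 hlb1 hℓ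
    have hS3 := side_est (fun s => D (1 - s)) C δ hC0 hδ0 hδ1 hEc htay2 hlb2 hℓ
    -- middle estimate
    have hmid : |∫ s in δ..(1-δ), Real.exp (-ℓ * D s)| ≤ 6 / m ^ 3 * ℓ⁻¹ ^ 3 := by
      have hδle : δ ≤ 1 - δ := by linarith
      have hnn : 0 ≤ ∫ s in δ..(1-δ), Real.exp (-ℓ * D s) :=
        intervalIntegral.integral_nonneg hδle fun x _ => (Real.exp_pos _).le
      rw [abs_of_nonneg hnn]
      have hconst : (∫ s in δ..(1-δ), Real.exp (-ℓ * D s))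
          ≤ ∫ _ in δ..(1-δ), Real.exp (-ℓ * m) := by
        apply intervalIntegral.integral_mono_on hδle (hFint δ (1-δ) hmemδ hmem1δ)
          intervalIntegrable_const
        intro x hx
        have hDx := isMinOn_iff.1 hzmin x hx
        exact Real.exp_le_exp.2 (by nlinarith [mul_nonneg hℓ0.le (sub_nonneg.2 hDx)])
      rw [intervalIntegral.integral_const, smul_eq_mul] at hconst
      have hcube := cube_exp_neg (x := ℓ * m) (by positivity)
      have hexp : Real.exp (-ℓ * m) ≤ 6 / (ℓ * m) ^ 3 := by
        rw [show -ℓ * m = -(ℓ * m) by ring, le_div_iff₀ (by positivity), mul_comm]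
        exact hcube
      calc (∫ s in δ..(1-δ), Real.exp (-ℓ * D s))
          ≤ (1 - δ - δ) * Real.exp (-ℓ * m) := hconst
        _ ≤ 1 * Real.exp (-ℓ * m) :=
            mul_le_mul_of_nonneg_right (by linarith) (Real.exp_pos _).le
        _ = Real.exp (-ℓ * m) := one_mul _
        _ ≤ 6 / (ℓ * m) ^ 3 := hexp
        _ = 6 / m ^ 3 * ℓ⁻¹ ^ 3 := by field_simp
    have htri : (∫ s in (0:ℝ)..1, Real.exp (-ℓ * D s)) - 2 / ℓ
        = ((∫ s in (0:ℝ)..δ, Real.exp (-ℓ * D s)) - 1 / ℓ)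
          + (∫ s in δ..(1-δ), Real.exp (-ℓ * D s))
          + ((∫ s in (0:ℝ)..δ, Real.exp (-ℓ * D (1 - s))) - 1 / ℓ) := by
      rw [hsplit, hflip]; ring
    rw [htri]
    calc |((∫ s in (0:ℝ)..δ, Real.exp (-ℓ * D s)) - 1 / ℓ)
          + (∫ s in δ..(1-δ), Real.exp (-ℓ * D s))
          + ((∫ s in (0:ℝ)..δ, Real.exp (-ℓ * D (1 - s))) - 1 / ℓ)|
        ≤ |((∫ s in (0:ℝ)..δ, Real.exp (-ℓ * D s)) - 1 / ℓ)
          + (∫ s in δ..(1-δ), Real.exp (-ℓ * D s))|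
          + |(∫ s in (0:ℝ)..δ, Real.exp (-ℓ * D (1 - s))) - 1 / ℓ| := abs_add_le _ _
      _ ≤ |(∫ s in (0:ℝ)..δ, Real.exp (-ℓ * D s)) - 1 / ℓ|
          + |∫ s in δ..(1-δ), Real.exp (-ℓ * D s)|
          + |(∫ s in (0:ℝ)..δ, Real.exp (-ℓ * D (1 - s))) - 1 / ℓ| := by
            have := abs_add_le ((∫ s in (0:ℝ)..δ, Real.exp (-ℓ * D s)) - 1 / ℓ)
              (∫ s in δ..(1-δ), Real.exp (-ℓ * D s))
            linarith
      _ ≤ (1536 * C + 2 / δ ^ 2) * ℓ⁻¹ ^ 3 + 6 / m ^ 3 * ℓ⁻¹ ^ 3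
          + (1536 * C + 2 / δ ^ 2) * ℓ⁻¹ ^ 3 := by
            exact add_le_add (add_le_add hS1 hmid) hS3
      _ = A * ℓ⁻¹ ^ 3 := by rw [hAdef]; ring
  have part3 : (fun ℓ : ℝ => (∫ s in (0 : ℝ)..1, Real.exp (-ℓ * D s))⁻¹ - ℓ / 2)
      =O[atTop] fun ℓ : ℝ => ℓ⁻¹ := by
    rw [isBigO_iff]
    refine ⟨A / 2, ?_⟩
    filter_upwards [eventually_ge_atTop (1:ℝ), eventually_ge_atTop (A + 1)] with ℓ hℓ1 hℓA
    have hℓ0 : (0:ℝ) < ℓ := lt_of_lt_of_le one_pos hℓ1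
    set I := ∫ s in (0:ℝ)..1, Real.exp (-ℓ * D s) with hIdef
    have hk := key ℓ hℓ1
    have hA2 : A ≤ ℓ ^ 2 := by nlinarith
    have h3 : A * ℓ⁻¹ ^ 3 ≤ 1 / ℓ := by
      calc A * ℓ⁻¹ ^ 3 ≤ ℓ ^ 2 * ℓ⁻¹ ^ 3 := mul_le_mul_of_nonneg_right hA2 (by positivity)
        _ = 1 / ℓ := by field_simp
    have hIlb : 1 / ℓ ≤ I := by
      have habs := abs_le.1 hk
      have h2 : 2 / ℓ - A * ℓ⁻¹ ^ 3 ≤ I := by linarith [habs.1]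
      have h4 : 2 / ℓ - 1 / ℓ = 1 / ℓ := by ring
      linarith
    have hIpos : 0 < I := lt_of_lt_of_le (by positivity) hIlb
    have hIinv : I⁻¹ ≤ ℓ := by
      have h := one_div_le_one_div_of_le (by positivity : (0:ℝ) < 1/ℓ) hIlb
      rwa [one_div_one_div, one_div] at h
    have hexpr : I⁻¹ - ℓ / 2 = (2 / ℓ - I) * (ℓ / 2) * I⁻¹ := by
      field_simp
    rw [Real.norm_eq_abs, Real.norm_eq_abs, hexpr, abs_mul, abs_mul,
      abs_of_pos (by positivity : (0:ℝ) < ℓ/2), abs_of_pos (inv_pos.2 hIpos),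
      abs_of_nonneg (by positivity : (0:ℝ) ≤ ℓ⁻¹)]
    have h1 : |2 / ℓ - I| ≤ A * ℓ⁻¹ ^ 3 := by rw [abs_sub_comm]; exact hk
    calc |2 / ℓ - I| * (ℓ / 2) * I⁻¹
        ≤ (A * ℓ⁻¹ ^ 3) * (ℓ / 2) * ℓ :=
          mul_le_mul (mul_le_mul_of_nonneg_right h1 (by positivity)) hIinv
            (inv_pos.2 hIpos).le (by positivity)
      _ = A / 2 * (ℓ⁻¹ ^ 3 * ℓ ^ 2) := by ring
      _ = A / 2 * ℓ⁻¹ := by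
          congr 1
          field_simp
  refine ⟨?_, part3.trans_tendsto tendsto_inv_atTop_zero, part3⟩
  rw [isBigO_iff]
  refine ⟨A, ?_⟩
  filter_upwards [eventually_ge_atTop (1:ℝ)] with ℓ hℓ
  have hℓ0 : (0:ℝ) < ℓ := lt_of_lt_of_le one_pos hℓ
  rw [Real.norm_eq_abs, Real.norm_eq_abs, abs_of_nonneg (by positivity : (0:ℝ) ≤ ℓ⁻¹ ^ 3)]
  exact key ℓ hℓ
end
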